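/- arXiv:0905.3703 — 5 statements merged into one kernel-verified Lean document; each statement's English description precedes it below -/
import Mathlib

section
/- Let K and L be compact convex sets in ℝⁿ and let ψ : ℝⁿ → ℝⁿ be a nonsingular (invertible) linear transformation. Then the orthogonal projection L_u contains a translate of K_u for every unit vector u if and only if (ψL)_u contains a translate of (ψK)_u for every unit vector u. -/
open scoped Pointwise RealInnerProductSpace
noncomputable section

/-- Abbreviation for n-dimensional Euclidean space. -/
abbrev Euc (n : ℕ) := EuclideanSpace ℝ (Fin n)

/-- The translate K + v of a set K by a vector v. -/
def transl {n : ℕ} (K : Set (Euc n)) (v : Euc n) : Set (Euc n) := (fun x => x + v) '' K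

/-- Orthogonal projection of a set onto a subspace ξ, viewed inside the ambient space. -/
def projSet {n : ℕ} (ξ : Submodule ℝ (Euc n)) (K : Set (Euc n)) : Set (Euc n) :=
  (fun x => (ξ.orthogonalProjection x : Euc n)) '' K

/-- A simplicial family of size m+1: distinct unit vectors spanning an m-dimensional
subspace, some positive combination of which vanishes (the outer unit normals of an
m-dimensional simplex). -/
def SimplicialFamily {n : ℕ} (m : ℕ) (u : Fin (m + 1) → Euc n) : Prop :=
  Function.Injective u ∧ (∀ i, ‖u i‖ = 1) ∧
    Module.finrank ℝ (Submodule.span ℝ (Set.range u)) = m ∧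
    ∃ c : Fin (m + 1) → ℝ, (∀ i, 0 < c i) ∧ ∑ i, c i • u i = 0

/-- L is d-reliable: whenever every projection of L onto a d-dimensional subspace contains
a translate of the corresponding projection of a compact convex set K, L contains a
translate of K. -/
def DReliable {n : ℕ} (d : ℕ) (L : Set (Euc n)) : Prop :=
  ∀ K : Set (Euc n), IsCompact K → Convex ℝ K → K.Nonempty →
    (∀ ξ : Submodule ℝ (Euc n), Module.finrank ℝ ξ = d →
      ∃ w, transl (projSet ξ K) w ⊆ projSet ξ L) →
    ∃ v, transl K v ⊆ L

/-- x is a regular boundary point of L: exactly one outer unit normal at x. -/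
def IsRegularPoint {n : ℕ} (L : Set (Euc n)) (x : Euc n) : Prop :=
  x ∈ frontier L ∧ ∃! u : Euc n, ‖u‖ = 1 ∧ ∀ y ∈ L, ⟪y - x, u⟫ ≤ 0

/-- u is the (unique) outer unit normal to L at the regular boundary point x. -/
def IsNormalAtRegularPoint {n : ℕ} (L : Set (Euc n)) (x u : Euc n) : Prop :=
  x ∈ frontier L ∧ ‖u‖ = 1 ∧ (∀ y ∈ L, ⟪y - x, u⟫ ≤ 0) ∧
    ∀ w : Euc n, ‖w‖ = 1 → (∀ y ∈ L, ⟪y - x, w⟫ ≤ 0) → w = u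

/-- The support set of P in direction u. -/
def supportSet {n : ℕ} (P : Set (Euc n)) (u : Euc n) : Set (Euc n) :=
  {x ∈ P | ∀ y ∈ P, ⟪y, u⟫ ≤ ⟪x, u⟫}

/-- u is an outer unit facet normal of P: the support set of P in direction u is a face of
codimension 1 in the affine hull of P. -/
def IsFacetNormal {n : ℕ} (P : Set (Euc n)) (u : Euc n) : Prop :=
  ‖u‖ = 1 ∧ Module.finrank ℝ (vectorSpan ℝ (supportSet P u)) + 1
      = Module.finrank ℝ (vectorSpan ℝ P)

/-- S is a k-dimensional simplex: the convex hull of k+1 affinely independent points. -/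
def IsSimplexOfDim {n : ℕ} (k : ℕ) (S : Set (Euc n)) : Prop :=
  ∃ p : Fin (k + 1) → Euc n, AffineIndependent ℝ p ∧ S = convexHull ℝ (Set.range p)

/-- C is d-decomposable: a direct Minkowski sum of at least two nonempty compact convex
sets lying in complementary subspaces of dimension at most d. -/
def DDecomposable {n : ℕ} (d : ℕ) (C : Set (Euc n)) : Prop :=
  ∃ (m : ℕ) (ξ : Fin m → Submodule ℝ (Euc n)) (Cs : Fin m → Set (Euc n)),
    2 ≤ m ∧ iSupIndep ξ ∧ (⨆ i, ξ i) = ⊤ ∧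
    (∀ i, Module.finrank ℝ (ξ i) ≤ d) ∧
    (∀ i, (Cs i).Nonempty ∧ IsCompact (Cs i) ∧ Convex ℝ (Cs i) ∧ Cs i ⊆ (ξ i : Set (Euc n))) ∧
    C = ∑ i, Cs i

/-- C is a d-decomposable orthogonal simplex product: a direct Minkowski sum of simplices of
dimension at most d lying in mutually orthogonal complementary subspaces of dimension at
most d. -/
def OrthSimplexProduct {n : ℕ} (d : ℕ) (C : Set (Euc n)) : Prop :=
  ∃ (m : ℕ) (ξ : Fin m → Submodule ℝ (Euc n)) (Cs : Fin m → Set (Euc n)),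
    2 ≤ m ∧ iSupIndep ξ ∧ (⨆ i, ξ i) = ⊤ ∧
    (∀ i, Module.finrank ℝ (ξ i) ≤ d) ∧
    (∀ i j, i ≠ j → ∀ x ∈ ξ i, ∀ y ∈ ξ j, ⟪x, y⟫ = 0) ∧
    (∀ i, Cs i ⊆ (ξ i : Set (Euc n)) ∧ ∃ k ≤ d, IsSimplexOfDim k (Cs i)) ∧
    C = ∑ i, Cs i

/-! If a linear map `ψ` sends the line `ℝ v` into the line `ℝ u`, then the projection of `ψ x`
onto `uᗮ` depends only on the projection of `x` onto `vᗮ`, so `(ψ K)_u` is the image of `K_v`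
under the linear map `P_{uᗮ} ∘ ψ`. Linear maps commute with translations and preserve
inclusions, so a translate of `K_v` inside `L_v` gives a translate of `(ψ K)_u` inside
`(ψ L)_u`, with `v` the direction of `ψ⁻¹ u`; the converse is the same argument for `ψ⁻¹`. -/

namespace Submodule

variable {E F : Type*} [NormedAddCommGroup E] [InnerProductSpace ℝ E]
  [NormedAddCommGroup F] [InnerProductSpace ℝ F]

theorem starProjection_orthogonal_map_starProjection_orthogonal (f : E →ₗ[ℝ] F)
    {V : Submodule ℝ E} {U : Submodule ℝ F} [V.HasOrthogonalProjection]
    [Uᗮ.HasOrthogonalProjection] (hVU : V.map f ≤ U) (x : E) :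
    Uᗮ.starProjection (f (Vᗮ.starProjection x)) = Uᗮ.starProjection (f x) := by
  have hU : f (V.starProjection x) ∈ Uᗮᗮ :=
    U.le_orthogonal_orthogonal (hVU (mem_map_of_mem (V.starProjection_apply_mem x)))
  rw [starProjection_orthogonal_val (K := V), map_sub, map_sub,
    (Uᗮ.starProjection_apply_eq_zero_iff).mpr hU, sub_zero]

end Submodule

theorem LinearEquiv.exists_norm_eq_one_map_span_singleton_le {E F : Type*}
    [NormedAddCommGroup E] [NormedSpace ℝ E] [AddCommGroup F] [Module ℝ F]
    (ψ : E ≃ₗ[ℝ] F) {u : F} (hu : u ≠ 0) :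
    ∃ v : E, ‖v‖ = 1 ∧ (ℝ ∙ v).map (ψ : E →ₗ[ℝ] F) ≤ ℝ ∙ u := by
  have hψu : ψ.symm u ≠ 0 := by simpa using hu
  refine ⟨‖ψ.symm u‖⁻¹ • ψ.symm u, norm_smul_inv_norm hψu, ?_⟩
  rw [Submodule.map_le_iff_le_comap, Submodule.span_singleton_le_iff_mem, Submodule.mem_comap]
  simpa using Submodule.smul_mem _ ‖ψ.symm u‖⁻¹ (Submodule.mem_span_singleton_self u)

section

variable {m n : ℕ}

theorem transl_image (g : Euc m →ₗ[ℝ] Euc n) (A : Set (Euc m)) (w : Euc m) :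
    transl (g '' A) (g w) = g '' transl A w := by
  simp only [transl, Set.image_image, map_add]

theorem projSet_orthogonal_image (f : Euc m →ₗ[ℝ] Euc n) {V : Submodule ℝ (Euc m)}
    {U : Submodule ℝ (Euc n)} (hVU : V.map f ≤ U) (S : Set (Euc m)) :
    projSet Uᗮ (f '' S) = (Uᗮ.starProjection.toLinearMap ∘ₗ f) '' projSet Vᗮ S := by
  simp only [projSet, Set.image_image, Submodule.coe_orthogonalProjectionOnto_apply,
    LinearMap.coe_comp, Function.comp_apply, ContinuousLinearMap.coe_coe,
    Submodule.starProjection_orthogonal_map_starProjection_orthogonal f hVU]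

theorem exists_transl_projSet_image_subset (f : Euc m →ₗ[ℝ] Euc n) {V : Submodule ℝ (Euc m)}
    {U : Submodule ℝ (Euc n)} (hVU : V.map f ≤ U) {K L : Set (Euc m)}
    (h : ∃ w, transl (projSet Vᗮ K) w ⊆ projSet Vᗮ L) :
    ∃ w, transl (projSet Uᗮ (f '' K)) w ⊆ projSet Uᗮ (f '' L) := by
  obtain ⟨w, hw⟩ := h
  refine ⟨(Uᗮ.starProjection.toLinearMap ∘ₗ f) w, ?_⟩
  rw [projSet_orthogonal_image f hVU, projSet_orthogonal_image f hVU, transl_image]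
  exact Set.image_mono hw

def ShadowsCoveredBy (K L : Set (Euc n)) : Prop :=
  ∀ u : Euc n, ‖u‖ = 1 → ∃ w, transl (projSet (ℝ ∙ u)ᗮ K) w ⊆ projSet (ℝ ∙ u)ᗮ L

theorem ShadowsCoveredBy.image {K L : Set (Euc m)} (h : ShadowsCoveredBy K L)
    (ψ : Euc m ≃ₗ[ℝ] Euc n) : ShadowsCoveredBy (ψ '' K) (ψ '' L) := by
  intro u hu
  obtain ⟨v, hv, hvu⟩ :=
    ψ.exists_norm_eq_one_map_span_singleton_le (norm_ne_zero_iff.mp (hu ▸ one_ne_zero))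
  exact exists_transl_projSet_image_subset ψ.toLinearMap hvu (h v hv)

theorem ShadowsCoveredBy.image_iff {K L : Set (Euc m)} (ψ : Euc m ≃ₗ[ℝ] Euc n) :
    ShadowsCoveredBy (ψ '' K) (ψ '' L) ↔ ShadowsCoveredBy K L :=
  ⟨fun h => by simpa only [Set.image_image, LinearEquiv.symm_apply_apply, Set.image_id']
    using h.image ψ.symm, fun h => h.image ψ⟩

end

theorem shadow_covering_linear_invariant_general {n : ℕ} (K L : Set (Euc n))
    (ψ : Euc n ≃ₗ[ℝ] Euc n) :
    (∀ u : Euc n, ‖u‖ = 1 →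
        ∃ w, transl (projSet (ℝ ∙ u)ᗮ K) w ⊆ projSet (ℝ ∙ u)ᗮ L) ↔
      (∀ u : Euc n, ‖u‖ = 1 →
        ∃ w, transl (projSet (ℝ ∙ u)ᗮ (⇑ψ '' K)) w ⊆ projSet (ℝ ∙ u)ᗮ (⇑ψ '' L)) :=
  (ShadowsCoveredBy.image_iff ψ).symm

/-- Shadow covering in every direction is invariant under nonsingular linear maps: L_u
contains a translate of K_u for all unit u iff (ψL)_u contains a translate of (ψK)_u for
all unit u. -/
theorem shadow_covering_linear_invariant {n : ℕ} (K L : Set (Euc n))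
    (hKc : IsCompact K) (hKv : Convex ℝ K) (hKne : K.Nonempty)
    (hLc : IsCompact L) (hLv : Convex ℝ L) (hLne : L.Nonempty)
    (ψ : Euc n ≃ₗ[ℝ] Euc n) :
    (∀ u : Euc n, ‖u‖ = 1 →
        ∃ w, transl (projSet (ℝ ∙ u)ᗮ K) w ⊆ projSet (ℝ ∙ u)ᗮ L) ↔
      (∀ u : Euc n, ‖u‖ = 1 →
        ∃ w, transl (projSet (ℝ ∙ u)ᗮ (⇑ψ '' K)) w ⊆ projSet (ℝ ∙ u)ᗮ (⇑ψ '' L)) :=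
  shadow_covering_linear_invariant_general K L ψ
end
end

section
/- Let L be a compact convex set in ℝⁿ and let 1 ≤ d ≤ n−1. Suppose L has regular boundary points x₀, …, x_{d+1} whose corresponding outer unit normals u₀, …, u_{d+1} form a simplicial family. Then there exists a polytope S (the convex hull of x₀, …, x_{d+1}) and a real number α > 1 such that for every d-dimensional subspace ξ of ℝⁿ the projection L_ξ contains a translate of (αS)_ξ, while L does not contain any translate of αS. In particular, L is not d-reliable. -/
open scoped Pointwise RealInnerProductSpace
noncomputable section

/-!
Let `U` be the span of the normals `uᵢ`; it has dimension `d + 1`, so every `d`-dimensional `ξ`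
contains a unit vector `v ∈ U ∩ ξᗮ`, and projecting onto `ξ` does not see the thickening
`L + [-v, v]`. Since `v ∈ U`, some `⟪v, uⱼ⟫ ≠ 0`. An outer normal of `L + [-v, v]` at `xᵢ` is an
outer normal of `L`, hence equals `uᵢ`, and is orthogonal to `v`; so `xⱼ` has none. The `uᵢ`,
`i ≠ j`, are linearly independent, which gives a point `q` with `⟪xᵢ - q, uᵢ⟫ = -1` for `i ≠ j`:
every vertex can be pushed away from `q` into `L + [-v, v]`, which therefore contains a homothetic
copy of `S` of ratio `> 1`. An interior ball of `L` absorbs small changes of `v`, so compactness of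
the unit sphere of `U` makes the ratio `α` uniform.

On the other hand, for `∑ cᵢ uᵢ = 0` with `cᵢ > 0`, the sum `∑ cᵢ ⟪xᵢ, uᵢ⟫` is positive, and
replacing each `xᵢ` by `α xᵢ + w` multiplies it by `α`, whereas the supporting half-spaces of `L`
at the `xᵢ` allow it only to decrease. So `L` contains no translate of `αS`, and `K = αS` shows
that `L` is not `d`-reliable.
-/

open Set Filter Topology Module

theorem linearIndependent_comp_succAbove {K V : Type*} [Field K] [AddCommGroup V] [Module K V]
    {m : ℕ} {u : Fin (m + 1) → V} (hrank : finrank K (Submodule.span K (range u)) = m)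
    {c : Fin (m + 1) → K} (hc : ∑ i, c i • u i = 0) {j : Fin (m + 1)} (hcj : c j ≠ 0) :
    LinearIndependent K (u ∘ j.succAbove) := by
  have huj : u j ∈ Submodule.span K (range (u ∘ j.succAbove)) := by
    rw [Fin.sum_univ_succAbove _ j, add_eq_zero_iff_eq_neg] at hc
    rw [← inv_smul_smul₀ hcj (u j), hc]
    exact Submodule.smul_mem _ _ <| Submodule.neg_mem _ <| Submodule.sum_mem _ fun k _ =>
      Submodule.smul_mem _ _ (Submodule.subset_span ⟨k, rfl⟩)
  have hspan : Submodule.span K (range (u ∘ j.succAbove)) = Submodule.span K (range u) := by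
    refine le_antisymm (Submodule.span_mono (range_comp_subset_range _ _)) ?_
    rw [Submodule.span_le]
    rintro _ ⟨i, rfl⟩
    rcases eq_or_ne i j with rfl | hij
    · exact huj
    · obtain ⟨k, rfl⟩ := Fin.exists_succAbove_eq hij
      exact Submodule.subset_span ⟨k, rfl⟩
  rw [linearIndependent_iff_card_eq_finrank_span, Fintype.card_fin, Set.finrank, hspan, hrank]

section InnerProductSpace

variable {E : Type*} [NormedAddCommGroup E] [InnerProductSpace ℝ E]

theorem exists_unit_inner_lt_of_notMem [CompleteSpace E] {M : Set E} (hMc : Convex ℝ M)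
    (hMcl : IsClosed M) (hMne : M.Nonempty) {p : E} (hp : p ∉ M) :
    ∃ ν : E, ‖ν‖ = 1 ∧ ∀ y ∈ M, ⟪y, ν⟫ < ⟪p, ν⟫ := by
  obtain ⟨f, s, hfM, hfp⟩ := geometric_hahn_banach_closed_point hMc hMcl hp
  set g := (InnerProductSpace.toDual ℝ E).symm f
  have hg : ∀ y, ⟪y, g⟫ = f y := fun y =>
    (real_inner_comm _ _).trans InnerProductSpace.toDual_symm_apply
  have hg0 : g ≠ 0 := by
    obtain ⟨y, hy⟩ := hMne
    rintro h0
    have := (hfM y hy).trans hfp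
    rw [← hg, ← hg, h0, inner_zero_right, inner_zero_right] at this
    exact this.false
  refine ⟨(‖g‖⁻¹ : ℝ) • g, norm_smul_inv_norm hg0, fun y hy => ?_⟩
  rw [real_inner_smul_right, real_inner_smul_right, hg, hg]
  exact mul_lt_mul_of_pos_left ((hfM y hy).trans hfp) (by positivity)

theorem Convex.exists_pos_add_smul_mem [FiniteDimensional ℝ E] {M : Set E} (hMc : Convex ℝ M)
    (hMcl : IsClosed M) {x : E} (hx : x ∈ M) {z : E}
    (hz : ∀ ν : E, ‖ν‖ = 1 → (∀ y ∈ M, ⟪y - x, ν⟫ ≤ 0) → ⟪z, ν⟫ < 0) :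
    ∃ t : ℝ, 0 < t ∧ x + t • z ∈ M := by
  -- Otherwise separate each `x + z / (k + 1)` from `M`: a limit of the separating unit normals is
  -- an outer normal at `x` with `⟪z, ν⟫ ≥ 0`.
  by_contra! hout
  have hsep : ∀ k : ℕ, ∃ ν : E, ‖ν‖ = 1 ∧ ∀ y ∈ M, ⟪y - x, ν⟫ < 1 / ((k : ℝ) + 1) * ⟪z, ν⟫ := by
    intro k
    obtain ⟨ν, hν, hlt⟩ :=
      exists_unit_inner_lt_of_notMem hMc hMcl ⟨x, hx⟩ (hout (1 / ((k : ℝ) + 1)) (by positivity))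
    refine ⟨ν, hν, fun y hy => ?_⟩
    have := hlt y hy
    rw [inner_add_left, real_inner_smul_left] at this
    rw [inner_sub_left]
    linarith
  choose ν hν hlt using hsep
  obtain ⟨a, ha, φ, hφ, hlim⟩ :=
    (isCompact_sphere (0 : E) 1).tendsto_subseq (x := ν) (by simpa using hν)
  have hinner : ∀ w, Tendsto (fun k => ⟪w, ν (φ k)⟫) atTop (𝓝 ⟪w, a⟫) := fun w =>
    tendsto_const_nhds.inner hlim
  have hnormal : ∀ y ∈ M, ⟪y - x, a⟫ ≤ 0 := fun y hy => by
    have hbound : Tendsto (fun k => 1 / ((φ k : ℝ) + 1) * ⟪z, ν (φ k)⟫) atTop (𝓝 (0 * ⟪z, a⟫)) :=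
      (tendsto_one_div_add_atTop_nhds_zero_nat.comp hφ.tendsto_atTop).mul (hinner z)
    simpa using le_of_tendsto_of_tendsto' (hinner _) hbound fun k => (hlt (φ k) y hy).le
  have hza : 0 ≤ ⟪z, a⟫ := ge_of_tendsto' (hinner z) fun k => by
    have := hlt (φ k) x hx
    rw [sub_self, inner_zero_left] at this
    exact (pos_of_mul_pos_right this (by positivity : (0 : ℝ) ≤ 1 / ((φ k : ℝ) + 1))).le
  exact (hz a (by simpa using ha) hnormal).not_ge hza

theorem exists_inner_eq_of_linearIndependent {ι : Type*} [Fintype ι] {w : ι → E}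
    (hw : LinearIndependent ℝ w) (t : ι → ℝ) : ∃ q : E, ∀ k, ⟪q, w k⟫ = t k := by
  set B := Basis.span hw
  have : FiniteDimensional ℝ (Submodule.span ℝ (range w)) := B.finiteDimensional_of_finite
  set q := (InnerProductSpace.toDual ℝ _).symm (LinearMap.toContinuousLinearMap (B.constr ℝ t))
  refine ⟨q, fun k => ?_⟩
  have hk : w k = B k := by simp [B, Basis.span_apply]
  rw [hk, ← Submodule.coe_inner, InnerProductSpace.toDual_symm_apply]
  exact B.constr_basis ℝ t k

theorem exists_unit_mem_inf_orthogonal_of_finrank_lt [FiniteDimensional ℝ E]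
    {U V : Submodule ℝ E} (h : finrank ℝ V < finrank ℝ U) :
    ∃ v : E, ‖v‖ = 1 ∧ v ∈ U ∧ v ∈ Vᗮ := by
  have hdim := Submodule.finrank_sup_add_finrank_inf_eq U Vᗮ
  have hsup := Submodule.finrank_le (U ⊔ Vᗮ)
  have hV := V.finrank_add_finrank_orthogonal
  have hne : U ⊓ Vᗮ ≠ ⊥ := by
    rw [Ne, ← Submodule.finrank_eq_zero]
    omega
  obtain ⟨v, hv, hv0⟩ := Submodule.exists_mem_ne_zero_of_ne_bot hne
  exact ⟨_, norm_smul_inv_norm hv0, (U ⊓ Vᗮ).smul_mem _ hv⟩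

theorem exists_inner_ne_zero_of_mem_span {ι : Type*} {u : ι → E} {v : E}
    (hvU : v ∈ Submodule.span ℝ (range u)) (hv : v ≠ 0) : ∃ j, ⟪v, u j⟫ ≠ 0 := by
  by_contra! h
  have hspan : Submodule.span ℝ (range u) ≤ (ℝ ∙ v)ᗮ := by
    rw [Submodule.span_le]
    rintro _ ⟨j, rfl⟩
    exact Submodule.mem_orthogonal_singleton_iff_inner_right.mpr (h j)
  exact hv (inner_self_eq_zero.mp
    (Submodule.mem_orthogonal_singleton_iff_inner_right.mp (hspan hvU)))


/-- A convex set lying in a proper affine subspace has two opposite unit normals at each point. -/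
theorem Convex.interior_nonempty_of_unique_unit_normal [FiniteDimensional ℝ E] {L : Set E}
    (hL : Convex ℝ L) {x u : E} (hx : x ∈ L)
    (huniq : ∀ w : E, ‖w‖ = 1 → (∀ y ∈ L, ⟪y - x, w⟫ ≤ 0) → w = u) :
    (interior L).Nonempty := by
  rw [hL.interior_nonempty_iff_affineSpan_eq_top]
  by_contra htop
  have hdir : (affineSpan ℝ L).direction ≠ ⊤ := fun h =>
    htop ((AffineSubspace.direction_eq_top_iff_of_nonempty ⟨x, subset_affineSpan ℝ L hx⟩).mp h)
  obtain ⟨e, he, -, hperp⟩ :=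
    exists_unit_mem_inf_orthogonal_of_finrank_lt (U := ⊤) (by simpa using Submodule.finrank_lt hdir)
  have hflat : ∀ y ∈ L, ⟪y - x, e⟫ = 0 := fun y hy =>
    Submodule.inner_right_of_mem_orthogonal
      (AffineSubspace.vsub_mem_direction (subset_affineSpan ℝ L hy) (subset_affineSpan ℝ L hx))
      hperp
  have hpos : e = u := huniq e he fun y hy => (hflat y hy).le
  have hneg : -e = u := huniq (-e) (by rwa [norm_neg]) fun y hy => by
    rw [inner_neg_right, hflat y hy, neg_zero]
  rw [← hneg, eq_neg_iff_add_eq_zero, ← two_smul ℝ, smul_eq_zero] at hpos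
  simp [hpos.resolve_left two_ne_zero] at he

theorem inner_sub_neg_of_mem_interior {L : Set E} {x u p : E} (hu : u ≠ 0)
    (hnormal : ∀ y ∈ L, ⟪y - x, u⟫ ≤ 0) (hp : p ∈ interior L) : ⟪p - x, u⟫ < 0 := by
  have hnear : ∀ᶠ t : ℝ in 𝓝 0, p + t • u ∈ L :=
    ((continuous_const.add (continuous_id.smul continuous_const)).tendsto' 0 p (by simp)).eventually
      (mem_interior_iff_mem_nhds.mp hp)
  obtain ⟨t, htL, ht⟩ := ((hnear.filter_mono nhdsWithin_le_nhds).and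
    (self_mem_nhdsWithin : Ioi (0 : ℝ) ∈ 𝓝[>] 0)).exists
  have := hnormal _ htL
  rw [add_sub_right_comm, inner_add_left, real_inner_smul_left, real_inner_self_eq_norm_sq] at this
  have : 0 < t * ‖u‖ ^ 2 := mul_pos ht (by positivity)
  linarith

theorem sum_mul_inner_pos_of_interior_nonempty {ι : Type*} [Fintype ι] [Nonempty ι] {L : Set E}
    {x u : ι → E} {c : ι → ℝ} (hc : ∀ i, 0 < c i) (hu : ∀ i, u i ≠ 0)
    (hcu : ∑ i, c i • u i = 0) (hnormal : ∀ i, ∀ y ∈ L, ⟪y - x i, u i⟫ ≤ 0)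
    (hint : (interior L).Nonempty) : 0 < ∑ i, c i * ⟪x i, u i⟫ := by
  obtain ⟨p, hp⟩ := hint
  have hp0 : ∑ i, c i * ⟪p, u i⟫ = 0 := by
    simp_rw [← real_inner_smul_right, ← inner_sum, hcu, inner_zero_right]
  have : 0 < ∑ i, c i * ⟪x i - p, u i⟫ := Finset.sum_pos (fun i _ => mul_pos (hc i) <| by
    rw [← neg_sub, inner_neg_left, neg_pos]
    exact inner_sub_neg_of_mem_interior (hu i) (hnormal i) hp) Finset.univ_nonempty
  simpa [inner_sub_left, mul_sub, hp0] using this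

theorem not_forall_smul_add_mem {ι : Type*} [Fintype ι] {L : Set E} {x u : ι → E} {c : ι → ℝ}
    (hc : ∀ i, 0 ≤ c i) (hcu : ∑ i, c i • u i = 0)
    (hnormal : ∀ i, ∀ y ∈ L, ⟪y - x i, u i⟫ ≤ 0) (hpos : 0 < ∑ i, c i * ⟪x i, u i⟫)
    {α : ℝ} (hα : 1 < α) (w : E) : ¬ ∀ i, α • x i + w ∈ L := by
  intro hmem
  have hle : ∑ i, c i * ⟪α • x i + w - x i, u i⟫ ≤ 0 := Finset.sum_nonpos fun i _ =>
    mul_nonpos_of_nonneg_of_nonpos (hc i) (hnormal i _ (hmem i))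
  have hw : ∑ i, c i * ⟪w, u i⟫ = 0 := by
    simp_rw [← real_inner_smul_right, ← inner_sum, hcu, inner_zero_right]
  have hsplit : ∑ i, c i * ⟪α • x i + w - x i, u i⟫
      = (α - 1) * ∑ i, c i * ⟪x i, u i⟫ + ∑ i, c i * ⟪w, u i⟫ := by
    rw [Finset.mul_sum, ← Finset.sum_add_distrib]
    refine Finset.sum_congr rfl fun i _ => ?_
    rw [show α • x i + w - x i = (α - 1) • x i + w by module, inner_add_left,
      real_inner_smul_left]
    ring
  rw [hsplit, hw, add_zero] at hle
  nlinarith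

theorem segment_neg_self_eq_image (v : E) :
    segment ℝ (-v) v = (fun t : ℝ => t • v) '' Icc (-1) 1 := by
  simpa [segment_eq_Icc] using
    (image_segment ℝ (LinearMap.toSpanSingleton ℝ E v).toAffineMap (-1) 1).symm

theorem mem_add_segment_neg_self {L : Set E} {v y : E} :
    y ∈ L + segment ℝ (-v) v ↔ ∃ l ∈ L, ∃ t ∈ Icc (-1 : ℝ) 1, l + t • v = y := by
  simp [segment_neg_self_eq_image, Set.mem_add]

theorem subset_add_segment_neg_self (L : Set E) (v : E) : L ⊆ L + segment ℝ (-v) v :=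
  fun l hl => mem_add_segment_neg_self.mpr ⟨l, hl, 0, by norm_num, by simp⟩

theorem IsCompact.add_segment_neg_self {L : Set E} (hL : IsCompact L) (v : E) :
    IsCompact (L + segment ℝ (-v) v) :=
  hL.add <| segment_neg_self_eq_image v ▸ isCompact_Icc.image (continuous_id.smul continuous_const)

theorem Convex.exists_pos_smul_sub_smul_mem {ι : Type*} [Finite ι] {M : Set E}
    (hM : Convex ℝ M) {x : ι → E} (hxM : ∀ i, x i ∈ M) {q : E}
    (hray : ∀ i, ∃ t : ℝ, 0 < t ∧ x i + t • (x i - q) ∈ M) :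
    ∃ T : ℝ, 0 < T ∧ ∀ s ∈ convexHull ℝ (range x), (1 + T) • s - T • q ∈ M := by
  have hev : ∀ᶠ T in 𝓝[>] (0 : ℝ), ∀ i, x i + T • (x i - q) ∈ M := by
    refine eventually_all.mpr fun i => ?_
    obtain ⟨t, ht, hxt⟩ := hray i
    filter_upwards [Ioc_mem_nhdsGT ht] with T ⟨hT0, hTt⟩
    have := hM.add_smul_mem (hxM i) hxt (t := T / t) ⟨by positivity, (div_le_one ht).mpr hTt⟩
    rwa [smul_smul, div_mul_cancel₀ _ ht.ne'] at this
  obtain ⟨T, hTM, hT⟩ := (hev.and self_mem_nhdsWithin).exists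
  refine ⟨T, hT, fun s hs => ?_⟩
  have hhom : (fun s => (1 + T) • s - T • q) = AffineMap.homothety q (1 + T) := by
    funext s
    simp only [AffineMap.homothety_apply, vsub_eq_sub, vadd_eq_add]
    module
  have hconv : Convex ℝ ((fun s => (1 + T) • s - T • q) ⁻¹' M) :=
    hhom ▸ hM.affine_preimage (AffineMap.homothety q (1 + T))
  refine convexHull_min ?_ hconv hs
  rintro _ ⟨i, rfl⟩
  simpa only [mem_preimage, show (1 + T) • x i - T • q = x i + T • (x i - q) by module] using hTM i

theorem Convex.exists_smul_add_mem_of_le {M S : Set E} (hM : Convex ℝ M) (hSM : S ⊆ M)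
    {α β : ℝ} (hα : 1 < α) (hβ : 1 ≤ β) (hβα : β ≤ α) {w : E}
    (hw : ∀ s ∈ S, α • s + w ∈ M) : ∃ w' : E, ∀ s ∈ S, β • s + w' ∈ M := by
  set θ := (β - 1) / (α - 1)
  have hθ : θ ∈ Icc (0 : ℝ) 1 :=
    ⟨div_nonneg (by linarith) (by linarith), (div_le_one (by linarith)).mpr (by linarith)⟩
  refine ⟨θ • w, fun s hs => ?_⟩
  have := hM.add_smul_mem (hSM hs) (y := (α - 1) • s + w)
    (by rw [show s + ((α - 1) • s + w) = α • s + w by module]; exact hw s hs) hθ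
  convert this using 1
  rw [smul_add, smul_smul, div_mul_cancel₀ _ (by linarith : α - 1 ≠ 0)]
  module

theorem Convex.sub_smul_add_smul_mem_of_ball_subset {M : Set E} (hM : Convex ℝ M) {p : E}
    {r : ℝ} (hball : Metric.ball p r ⊆ M) {θ : ℝ} (hθ0 : 0 < θ) (hθ1 : θ ≤ 1) {m e : E}
    (hm : m ∈ M) (he : ‖e‖ < θ * r) : (1 - θ) • (m + e) + θ • p ∈ M := by
  have hp : p + (θ⁻¹ * (1 - θ)) • e ∈ M := hball <| by
    rw [mem_ball_iff_norm, add_sub_cancel_left, norm_smul,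
      Real.norm_of_nonneg (mul_nonneg (inv_nonneg.mpr hθ0.le) (by linarith))]
    calc θ⁻¹ * (1 - θ) * ‖e‖ ≤ θ⁻¹ * ‖e‖ := by
          gcongr
          exact mul_le_of_le_one_right (inv_nonneg.mpr hθ0.le) (by linarith)
      _ < r := by rw [inv_mul_lt_iff₀ hθ0]; linarith
  convert hM hm hp (by linarith : (0 : ℝ) ≤ 1 - θ) hθ0.le (by ring) using 1
  rw [smul_add θ, smul_smul, ← mul_assoc, mul_inv_cancel₀ hθ0.ne', one_mul]
  module

theorem exists_smul_add_mem_add_segment_of_norm_sub_lt {L S : Set E} (hL : Convex ℝ L) {p : E}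
    {r : ℝ} (hr : 0 < r) (hball : Metric.ball p r ⊆ L) {v : E} {α : ℝ} (hα : 1 < α) {w : E}
    (hw : ∀ s ∈ S, α • s + w ∈ L + segment ℝ (-v) v) :
    ∃ δ > 0, ∀ v' : E, ‖v' - v‖ < δ →
      ∃ w' : E, ∀ s ∈ S, ((α + 1) / 2) • s + w' ∈ L + segment ℝ (-v') v' := by
  set θ := (α - 1) / (2 * α)
  have hθ0 : 0 < θ := div_pos (by linarith) (by linarith)
  have hθ1 : θ ≤ 1 := (div_le_one (by linarith)).mpr (by linarith)
  refine ⟨θ * r, mul_pos hθ0 hr, fun v' hv' => ⟨(1 - θ) • w + θ • p, fun s hs => ?_⟩⟩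
  obtain ⟨l, hl, t, ht, hlt⟩ := mem_add_segment_neg_self.mp (hw s hs)
  have he : ‖t • (v - v')‖ < θ * r :=
    calc ‖t • (v - v')‖ = |t| * ‖v' - v‖ := by rw [norm_smul, norm_sub_rev, Real.norm_eq_abs]
      _ ≤ 1 * ‖v' - v‖ := by gcongr; exact abs_le.mpr ht
      _ < θ * r := by linarith
  have hmem := (hL.add (convex_segment _ _)).sub_smul_add_smul_mem_of_ball_subset
    (hball.trans (subset_add_segment_neg_self L v')) hθ0 hθ1
    (mem_add_segment_neg_self.mpr ⟨l, hl, t, ht, rfl⟩) he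
  have hscale : (1 - θ) * α = (α + 1) / 2 := by
    simp only [θ]
    field_simp
    ring
  convert hmem using 1
  rw [show l + t • v' + t • (v - v') = α • s + w by rw [← hlt]; module, ← hscale]
  module

end InnerProductSpace

theorem IsNormalAtRegularPoint.mem {n : ℕ} {L : Set (Euc n)} {x u : Euc n} (hL : IsClosed L)
    (h : IsNormalAtRegularPoint L x u) : x ∈ L :=
  hL.frontier_subset h.1

section RegularPoints

variable {n m : ℕ} {L : Set (Euc n)} {x u : Fin (m + 1) → Euc n}

theorem exists_smul_add_mem_add_segment (hLc : IsCompact L) (hLv : Convex ℝ L)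
    (hreg : ∀ i, IsNormalAtRegularPoint L (x i) (u i)) (hsimp : SimplicialFamily m u)
    {v : Euc n} (hvU : v ∈ Submodule.span ℝ (range u)) (hv : v ≠ 0) :
    ∃ α : ℝ, 1 < α ∧ ∃ w, ∀ s ∈ convexHull ℝ (range x), α • s + w ∈ L + segment ℝ (-v) v := by
  obtain ⟨-, -, hrank, c, hc, hcu⟩ := hsimp
  obtain ⟨j, hj⟩ := exists_inner_ne_zero_of_mem_span hvU hv
  obtain ⟨q, hq⟩ : ∃ q, ∀ i ≠ j, ⟪x i - q, u i⟫ = -1 := by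
    obtain ⟨q, hq⟩ := exists_inner_eq_of_linearIndependent
      (linearIndependent_comp_succAbove hrank hcu (hc j).ne')
      (fun k => ⟪x (j.succAbove k), u (j.succAbove k)⟫ + 1)
    refine ⟨q, fun i hi => ?_⟩
    obtain ⟨k, rfl⟩ := Fin.exists_succAbove_eq hi
    have hqk := hq k
    rw [Function.comp_apply] at hqk
    rw [inner_sub_left, hqk]
    ring
  set M := L + segment ℝ (-v) v
  have hM : Convex ℝ M := hLv.add (convex_segment _ _)
  have hLM : L ⊆ M := subset_add_segment_neg_self L v
  have hxM : ∀ i, x i ∈ M := fun i => hLM ((hreg i).mem hLc.isClosed)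
  -- The only outer normal of `M` at `xᵢ` is `uᵢ`, and it must be orthogonal to `v`; so `i ≠ j`.
  have hray : ∀ i, ∃ t : ℝ, 0 < t ∧ x i + t • (x i - q) ∈ M := by
    intro i
    refine hM.exists_pos_add_smul_mem (hLc.add_segment_neg_self v).isClosed (hxM i)
      fun ν hν hνM => ?_
    have hνu : ν = u i := (hreg i).2.2.2 ν hν fun y hy => hνM y (hLM hy)
    have hxL := (hreg i).mem hLc.isClosed
    have hplus := hνM _ (add_mem_add hxL (right_mem_segment ℝ (-v) v))
    have hminus := hνM _ (add_mem_add hxL (left_mem_segment ℝ (-v) v))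
    rw [add_sub_cancel_left] at hplus hminus
    have hij : i ≠ j := by
      rintro rfl
      rw [inner_neg_left] at hminus
      exact hj (hνu ▸ le_antisymm hplus (by linarith))
    rw [hνu, hq i hij]
    norm_num
  obtain ⟨T, hT, hTM⟩ := hM.exists_pos_smul_sub_smul_mem hxM hray
  exact ⟨1 + T, by linarith, -(T • q), fun s hs => by simpa [sub_eq_add_neg] using hTM s hs⟩

theorem exists_uniform_smul_add_mem_add_segment (hLc : IsCompact L) (hLv : Convex ℝ L)
    (hint : (interior L).Nonempty) (hreg : ∀ i, IsNormalAtRegularPoint L (x i) (u i))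
    (hsimp : SimplicialFamily m u) :
    ∃ α : ℝ, 1 < α ∧ ∀ v : Euc n, ‖v‖ = 1 → v ∈ Submodule.span ℝ (range u) →
      ∃ w, ∀ s ∈ convexHull ℝ (range x), α • s + w ∈ L + segment ℝ (-v) v := by
  set S := convexHull ℝ (range x)
  have hSL : S ⊆ L :=
    convexHull_min (range_subset_iff.mpr fun i => (hreg i).mem hLc.isClosed) hLv
  obtain ⟨p, hp⟩ := hint
  obtain ⟨r, hr, hball⟩ := Metric.isOpen_iff.mp isOpen_interior p hp
  have hK : IsCompact (Metric.sphere (0 : Euc n) 1 ∩ Submodule.span ℝ (range u)) :=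
    (isCompact_sphere 0 1).inter_right (Submodule.closed_of_finiteDimensional _)
  suffices ∃ α : ℝ, 1 < α ∧ ∀ v ∈ Metric.sphere (0 : Euc n) 1 ∩ Submodule.span ℝ (range u),
      ∃ w, ∀ s ∈ S, α • s + w ∈ L + segment ℝ (-v) v by
    obtain ⟨α, hα, hfit⟩ := this
    exact ⟨α, hα, fun v hv hvU => hfit v ⟨by simpa using hv, hvU⟩⟩
  refine hK.induction_on ⟨2, one_lt_two, by simp⟩ ?_ ?_ ?_
  · rintro K K' hKK' ⟨α, hα, hfit⟩
    exact ⟨α, hα, fun v hv => hfit v (hKK' hv)⟩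
  · rintro K K' ⟨α, hα, hfit⟩ ⟨α', hα', hfit'⟩
    have hmono : ∀ {β γ : ℝ} {v : Euc n}, 1 < β → 1 < γ → γ ≤ β →
        (∃ w, ∀ s ∈ S, β • s + w ∈ L + segment ℝ (-v) v) →
        ∃ w, ∀ s ∈ S, γ • s + w ∈ L + segment ℝ (-v) v := fun hβ hγ hγβ ⟨_, hw⟩ =>
      (hLv.add (convex_segment _ _)).exists_smul_add_mem_of_le
        (hSL.trans (subset_add_segment_neg_self L _)) hβ hγ.le hγβ hw
    refine ⟨min α α', lt_min hα hα', ?_⟩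
    rintro v (hv | hv)
    · exact hmono hα (lt_min hα hα') (min_le_left _ _) (hfit v hv)
    · exact hmono hα' (lt_min hα hα') (min_le_right _ _) (hfit' v hv)
  · intro v hv
    have hv0 : v ≠ 0 := ne_zero_of_mem_unit_sphere ⟨v, hv.1⟩
    obtain ⟨α, hα, w, hw⟩ := exists_smul_add_mem_add_segment hLc hLv hreg hsimp hv.2 hv0
    obtain ⟨δ, hδ, hnear⟩ := exists_smul_add_mem_add_segment_of_norm_sub_lt hLv hr
      (hball.trans interior_subset) hα hw
    exact ⟨Metric.ball v δ, mem_nhdsWithin_of_mem_nhds (Metric.ball_mem_nhds v hδ),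
      (α + 1) / 2, by linarith, fun v' hv' => hnear v' (mem_ball_iff_norm.mp hv')⟩

theorem transl_projSet_subset_of_mem_orthogonal {ξ : Submodule ℝ (Euc n)} {S : Set (Euc n)}
    {v w : Euc n} {α : ℝ} (hv : v ∈ ξᗮ) (hw : ∀ s ∈ S, α • s + w ∈ L + segment ℝ (-v) v) :
    transl (projSet ξ (α • S)) (ξ.orthogonalProjectionOnto w) ⊆ projSet ξ L := by
  rintro _ ⟨_, ⟨_, ⟨s, hs, rfl⟩, rfl⟩, rfl⟩
  obtain ⟨l, hl, t, -, hlt⟩ := mem_add_segment_neg_self.mp (hw s hs)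
  refine ⟨l, hl, ?_⟩
  dsimp only
  rw [← Submodule.coe_add, ← map_add, ← hlt, map_add, map_smul,
    Submodule.orthogonalProjectionOnto_apply_of_mem_orthogonal hv, smul_zero, add_zero]

theorem not_exists_transl_smul_convexHull_subset (hint : (interior L).Nonempty)
    (hreg : ∀ i, IsNormalAtRegularPoint L (x i) (u i)) (hsimp : SimplicialFamily m u)
    {α : ℝ} (hα : 1 < α) : ¬ ∃ w, transl (α • convexHull ℝ (range x)) w ⊆ L := by
  obtain ⟨-, hunit, -, c, hc, hcu⟩ := hsimp
  have hnormal : ∀ i, ∀ y ∈ L, ⟪y - x i, u i⟫ ≤ 0 := fun i => (hreg i).2.2.1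
  have hpos := sum_mul_inner_pos_of_interior_nonempty hc
    (fun i => norm_ne_zero_iff.mp (by rw [hunit i]; exact one_ne_zero)) hcu hnormal hint
  rintro ⟨w, hw⟩
  exact not_forall_smul_add_mem (fun i => (hc i).le) hcu hnormal hpos hα w fun i =>
    hw ⟨α • x i, smul_mem_smul_set (subset_convexHull ℝ _ ⟨i, rfl⟩), rfl⟩

end RegularPoints

theorem simplicial_normals_not_reliable_general {n d : ℕ}
    (L : Set (Euc n)) (hLc : IsCompact L) (hLv : Convex ℝ L)
    (x u : Fin (d + 1 + 1) → Euc n)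
    (hreg : ∀ i, IsNormalAtRegularPoint L (x i) (u i))
    (hsimp : SimplicialFamily (d + 1) u) :
    (∃ α : ℝ, 1 < α ∧
      (∀ ξ : Submodule ℝ (Euc n), Module.finrank ℝ ξ = d →
        ∃ w, transl (projSet ξ (α • convexHull ℝ (Set.range x))) w ⊆ projSet ξ L) ∧
      ¬ ∃ v, transl (α • convexHull ℝ (Set.range x)) v ⊆ L) ∧
    ¬ DReliable d L := by
  have hint : (interior L).Nonempty :=
    hLv.interior_nonempty_of_unique_unit_normal ((hreg 0).mem hLc.isClosed) (hreg 0).2.2.2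
  obtain ⟨α, hα, hfit⟩ := exists_uniform_smul_add_mem_add_segment hLc hLv hint hreg hsimp
  have hshadows : ∀ ξ : Submodule ℝ (Euc n), Module.finrank ℝ ξ = d →
      ∃ w, transl (projSet ξ (α • convexHull ℝ (range x))) w ⊆ projSet ξ L := by
    intro ξ hξ
    obtain ⟨v, hv, hvU, hvξ⟩ := exists_unit_mem_inf_orthogonal_of_finrank_lt
      (U := Submodule.span ℝ (range u)) (V := ξ) (by rw [hξ, hsimp.2.2.1]; omega)
    obtain ⟨w, hw⟩ := hfit v hv hvU
    exact ⟨_, transl_projSet_subset_of_mem_orthogonal hvξ hw⟩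
  have hnofit := not_exists_transl_smul_convexHull_subset hint hreg hsimp hα
  refine ⟨⟨α, hα, hshadows, hnofit⟩, fun hrel => hnofit (hrel _ ?_ ?_ ?_ hshadows)⟩
  · exact (Set.Finite.isCompact_convexHull ℝ (finite_range x)).smul α
  · exact (convex_convexHull ℝ _).smul α
  · exact (convexHull_nonempty_iff.mpr (range_nonempty x)).smul_set

/-- If L has regular boundary points x₀, …, x_{d+1} whose outer unit normals form a
simplicial family, then for the polytope S = conv{x₀, …, x_{d+1}} there is α > 1 such that
every d-dimensional shadow of L contains a translate of the corresponding shadow of αS,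
while L contains no translate of αS.  In particular, L is not d-reliable. -/
theorem simplicial_normals_not_reliable {n d : ℕ} (hd1 : 1 ≤ d) (hdn : d ≤ n - 1)
    (L : Set (Euc n)) (hLc : IsCompact L) (hLv : Convex ℝ L) (hLne : L.Nonempty)
    (x u : Fin (d + 1 + 1) → Euc n)
    (hreg : ∀ i, IsNormalAtRegularPoint L (x i) (u i))
    (hsimp : SimplicialFamily (d + 1) u) :
    (∃ α : ℝ, 1 < α ∧
      (∀ ξ : Submodule ℝ (Euc n), Module.finrank ℝ ξ = d →
        ∃ w, transl (projSet ξ (α • convexHull ℝ (Set.range x))) w ⊆ projSet ξ L) ∧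
      ¬ ∃ v, transl (α • convexHull ℝ (Set.range x)) v ⊆ L) ∧
    ¬ DReliable d L :=
  simplicial_normals_not_reliable_general L hLc hLv x u hreg hsimp
end
end

section
/- Let L be a smooth convex body in ℝⁿ (a compact convex set with nonempty interior, every boundary point of which is regular). Then there exists an n-dimensional simplex S such that the orthogonal projection L_u contains a translate of S_u for every unit direction u, while L does not contain any translate of S. -/
open scoped Pointwise RealInnerProductSpace
noncomputable section

/-!
Maximise the determinant `D(x)` of the matrix with columns `(1, x i)` over vertices `x i ∈ L`.
At the maximiser, the gradient `a i` of `D` in the vertex `x i` is an outer normal of `L` at `x i`,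
and a dilate `s • x` with `s > 1` has determinant `s ^ n * D(x) > D(x)`, so no translate of that
dilated simplex lies in `L`.

For a unit vector `u`, the `a i` span the space, so some `a i₀` is not orthogonal to `u`, and all
the other `a i` have negative inner product with `z = ∑ m, (x i₀ - x m)`. Smoothness makes `a i`
the only outer normal at `x i` up to scaling, so `x i + δ • (z + c i • u) ∈ interior L` for
suitable `c i` and small `δ > 0`. Thus after a translation and after sliding each vertex along `u`,
the simplex lies in the interior of `L`; this survives a dilation by some `s > 1`, uniformly in `u`
by compactness of the sphere, and sliding along `u` is invisible in the projection onto `(ℝ ∙ u)ᗮ`.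
-/

open Matrix Filter Topology Set

section VertexMatrix

variable {n : ℕ}

/-- The columns are the homogeneous coordinates `(1, x j)`, so its determinant is `n!` times the
signed volume of the simplex with vertices `x`. -/
def vertexMatrix (x : Fin (n + 1) → Euc n) : Matrix (Fin (n + 1)) (Fin (n + 1)) ℝ :=
  Matrix.of fun k j => vecCons 1 (x j).ofLp k

def zeroCons : Euc n →ₗ[ℝ] Fin (n + 1) → ℝ :=
  LinearMap.vecCons 0 (WithLp.linearEquiv 2 ℝ (Fin n → ℝ)).toLinearMap

lemma vecCons_one_sub_vecCons_one (y z : Euc n) :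
    vecCons (1 : ℝ) y.ofLp - vecCons 1 z.ofLp = zeroCons (y - z) := by
  ext k; refine Fin.cases ?_ (fun k => ?_) k <;> simp [zeroCons]

lemma det_vertexMatrix_update (x : Fin (n + 1) → Euc n) (i : Fin (n + 1)) (y : Euc n) :
    (vertexMatrix (Function.update x i y)).det = (vertexMatrix x).cramer (vecCons 1 y.ofLp) i := by
  rw [cramer_apply]
  congr 1
  ext k j
  by_cases h : j = i <;> simp [vertexMatrix, h]

def detGrad (x : Fin (n + 1) → Euc n) (i : Fin (n + 1)) : Euc n :=
  (InnerProductSpace.toDual ℝ (Euc n)).symm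
    (LinearMap.toContinuousLinearMap (LinearMap.proj i ∘ₗ (vertexMatrix x).cramer ∘ₗ zeroCons))

lemma inner_detGrad (x : Fin (n + 1) → Euc n) (i : Fin (n + 1)) (y : Euc n) :
    ⟪detGrad x i, y⟫ = (vertexMatrix x).cramer (zeroCons y) i := by
  simp [detGrad, InnerProductSpace.toDual_symm_apply]

lemma det_update_sub_det_update (x : Fin (n + 1) → Euc n) (i : Fin (n + 1)) (y z : Euc n) :
    (vertexMatrix (Function.update x i y)).det - (vertexMatrix (Function.update x i z)).det
      = ⟪detGrad x i, y - z⟫ := by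
  rw [det_vertexMatrix_update, det_vertexMatrix_update, inner_detGrad, ← Pi.sub_apply,
    ← map_sub, vecCons_one_sub_vecCons_one]

lemma det_update_vertex (x : Fin (n + 1) → Euc n) (i j : Fin (n + 1)) :
    (vertexMatrix (Function.update x i (x j))).det
      = if i = j then (vertexMatrix x).det else 0 := by
  rw [det_vertexMatrix_update, cramer_row_self _ (vecCons 1 (x j).ofLp) j fun _ => rfl,
    Pi.single_apply]

lemma inner_detGrad_sub (x : Fin (n + 1) → Euc n) (i j k : Fin (n + 1)) :
    ⟪detGrad x i, x j - x k⟫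
      = (if i = j then (vertexMatrix x).det else 0) -
          if i = k then (vertexMatrix x).det else 0 := by
  rw [← det_update_sub_det_update, det_update_vertex, det_update_vertex]

lemma eq_zero_of_forall_inner_detGrad_eq_zero {x : Fin (n + 1) → Euc n}
    (hx : (vertexMatrix x).det ≠ 0) {u : Euc n} (hu : ∀ i, ⟪detGrad x i, u⟫ = 0) : u = 0 := by
  have hcramer : (vertexMatrix x).cramer (zeroCons u) = 0 := funext fun i => by
    rw [← inner_detGrad, hu, Pi.zero_apply]
  have h := mulVec_cramer (vertexMatrix x) (zeroCons u)
  rw [hcramer, mulVec_zero, eq_comm, smul_eq_zero] at h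
  ext k
  simpa [zeroCons] using congrFun (h.resolve_left hx) k.succ

lemma vertexMatrix_mulVec (x : Fin (n + 1) → Euc n) (w : Fin (n + 1) → ℝ) :
    vertexMatrix x *ᵥ w = vecCons (∑ j, w j) (∑ j, w j • x j).ofLp := by
  ext k; refine Fin.cases ?_ (fun k => ?_) k <;> simp [vertexMatrix, mulVec, dotProduct, mul_comm]

lemma affineIndependent_of_det_ne_zero {x : Fin (n + 1) → Euc n}
    (hx : (vertexMatrix x).det ≠ 0) : AffineIndependent ℝ x := by
  rw [affineIndependent_iff_of_fintype]
  intro w hw hwx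
  rw [Finset.weightedVSub_eq_linear_combination _ hw] at hwx
  have h : vertexMatrix x *ᵥ w = 0 := by
    rw [vertexMatrix_mulVec, hw, hwx]; ext k; refine Fin.cases ?_ (fun k => ?_) k <;> simp
  exact congrFun (eq_zero_of_mulVec_eq_zero hx h)

lemma det_vertexMatrix_smul_add (x : Fin (n + 1) → Euc n) (s : ℝ) (v : Euc n) :
    (vertexMatrix fun j => s • x j + v).det = s ^ n * (vertexMatrix x).det := by
  -- `N` acts on homogeneous coordinates as `(1, y) ↦ (1, s • y + v)`
  set N : Matrix (Fin (n + 1)) (Fin (n + 1)) ℝ :=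
    Matrix.of fun k l => if l = 0 then vecCons 1 v.ofLp k else if k = l then s else 0
  have hN : N.IsLowerTriangular := fun k l (hkl : k < l) => by
    simp [N, (Fin.zero_le k).trans_lt hkl |>.ne', hkl.ne]
  have hdetN : N.det = s ^ n := by
    simp [det_of_isLowerTriangular N hN, Fin.prod_univ_succ, N, Fin.succ_ne_zero]
  have hmul : (vertexMatrix fun j => s • x j + v) = N * vertexMatrix x := by
    ext k j
    refine Fin.cases ?_ (fun k => ?_) k <;>
      simp [N, vertexMatrix, mul_apply, Fin.sum_univ_succ, (Fin.succ_ne_zero _).symm, add_comm]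
  rw [hmul, det_mul, hdetN]

def stdVertices (n : ℕ) : Fin (n + 1) → Euc n := Fin.cons 0 fun k => EuclideanSpace.single k 1

lemma det_vertexMatrix_stdVertices : (vertexMatrix (stdVertices n)).det = 1 := by
  have h : (vertexMatrix (stdVertices n)).IsUpperTriangular := fun k l (hlk : l < k) => by
    cases k using Fin.cases with
    | zero => exact absurd hlk (Fin.not_lt_zero _)
    | succ k => cases l using Fin.cases with
      | zero => simp [vertexMatrix, stdVertices]
      | succ l => simp [vertexMatrix, stdVertices, (Fin.succ_lt_succ_iff.mp hlk).ne']
  rw [det_of_isUpperTriangular h, Fin.prod_univ_succ]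
  simp [vertexMatrix, stdVertices]

lemma norm_stdVertices_le_one (i : Fin (n + 1)) : ‖stdVertices n i‖ ≤ 1 := by
  cases i using Fin.cases <;> simp [stdVertices]

lemma continuous_det_vertexMatrix :
    Continuous fun x : Fin (n + 1) → Euc n => (vertexMatrix x).det := by
  refine Continuous.matrix_det (continuous_matrix fun k j => ?_)
  refine Fin.cases ?_ (fun k => ?_) k
  · exact continuous_const
  · exact (EuclideanSpace.proj k).continuous.comp (continuous_apply j)

end VertexMatrix

section OuterNormal

variable {n : ℕ} {L : Set (Euc n)} {x a z : Euc n}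

def IsOuterNormal (L : Set (Euc n)) (x a : Euc n) : Prop := ∀ y ∈ L, ⟪y - x, a⟫ ≤ 0

lemma IsOuterNormal.smul (h : IsOuterNormal L x a) {c : ℝ} (hc : 0 ≤ c) :
    IsOuterNormal L x (c • a) := fun y hy => by
  rw [inner_smul_right]; exact mul_nonpos_of_nonneg_of_nonpos hc (h y hy)

lemma IsOuterNormal.notMem_interior (h : IsOuterNormal L x a) (ha : a ≠ 0) :
    x ∉ interior L := by
  intro hx
  have hcont : Continuous fun t : ℝ => x + t • a := by fun_prop
  have hnear : ∀ᶠ t in 𝓝[>] (0 : ℝ), x + t • a ∈ L := nhdsWithin_le_nhds <|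
    hcont.continuousAt.eventually_mem (by simpa using mem_interior_iff_mem_nhds.1 hx)
  obtain ⟨t, htL, ht⟩ := (hnear.and self_mem_nhdsWithin).exists
  have h' := h _ htL
  rw [add_sub_cancel_left, real_inner_smul_left, real_inner_self_eq_norm_sq] at h'
  linarith [mul_pos ht (pow_pos (norm_pos_iff.2 ha) 2)]

lemma IsRegularPoint.inner_neg (hx : IsRegularPoint L x) (ha : IsOuterNormal L x a)
    {b : Euc n} (hb : IsOuterNormal L x b) (hb0 : b ≠ 0) (hz : ⟪z, a⟫ < 0) : ⟪z, b⟫ < 0 := by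
  have ha0 : a ≠ 0 := by rintro rfl; simp at hz
  have hunit : ‖a‖⁻¹ • a = ‖b‖⁻¹ • b :=
    hx.2.unique ⟨norm_smul_inv_norm ha0, ha.smul (by positivity)⟩
      ⟨norm_smul_inv_norm hb0, hb.smul (by positivity)⟩
  have h := congrArg (⟪z, ·⟫) hunit
  simp only [real_inner_smul_right] at h
  have : ‖a‖⁻¹ * ⟪z, a⟫ < 0 := mul_neg_of_pos_of_neg (by positivity) hz
  exact neg_of_mul_neg_right (h ▸ this) (inv_nonneg.2 (norm_nonneg b))

lemma IsRegularPoint.eventually_add_smul_mem_interior (hLv : Convex ℝ L)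
    (hLint : (interior L).Nonempty) (hx : IsRegularPoint L x) (hxL : x ∈ L)
    (ha : IsOuterNormal L x a) (hz : ⟪z, a⟫ < 0) :
    ∀ᶠ t in 𝓝[>] (0 : ℝ), x + t • z ∈ interior L := by
  suffices ∃ t : ℝ, 0 < t ∧ x + t • z ∈ interior L by
    obtain ⟨t, ht, hmem⟩ := this
    filter_upwards [Ioc_mem_nhdsGT ht] with s hs
    have := hLv.add_smul_mem_interior hxL hmem ⟨div_pos hs.1 ht, (div_le_one ht).2 hs.2⟩
    rwa [smul_smul, div_mul_cancel₀ _ ht.ne'] at this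
  by_contra! hray
  -- a hyperplane separating `interior L` from the ray `x + ℝ≥0 z` is a second outer normal at `x`
  have hdisj : Disjoint (interior L) (AffineMap.lineMap x (x + z) '' Ici (0 : ℝ)) := by
    rw [disjoint_right]
    rintro _ ⟨t, ht, rfl⟩
    rcases (mem_Ici.1 ht).eq_or_lt with rfl | ht
    · simpa using ha.notMem_interior (by rintro rfl; simp at hz)
    · simpa [AffineMap.lineMap_apply, add_comm] using hray t ht
  obtain ⟨f, c, hf_int, hf_ray⟩ := geometric_hahn_banach_open hLv.interior isOpen_interior
    ((convex_Ici 0).affine_image _) hdisj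
  have hfL : ∀ y ∈ L, f y ≤ c := by
    have : closure (interior L) ⊆ {y | f y ≤ c} :=
      closure_minimal (fun y hy => (hf_int y hy).le) (isClosed_le f.continuous continuous_const)
    rw [hLv.closure_interior_eq_closure_of_nonempty_interior hLint] at this
    exact fun y hy => this (subset_closure hy)
  have hfx : f x = c :=
    (hfL x hxL).antisymm (by simpa using hf_ray x ⟨0, self_mem_Ici, by simp⟩)
  have hfz : 0 ≤ f z := by
    have := hf_ray (x + z) ⟨1, mem_Ici.2 zero_le_one, by simp⟩
    rw [map_add, hfx] at this
    linarith
  set b := (InnerProductSpace.toDual ℝ (Euc n)).symm f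
  have hb : ∀ y, ⟪b, y⟫ = f y := fun y => InnerProductSpace.toDual_symm_apply
  have hb_normal : IsOuterNormal L x b := fun y hy => by
    rw [real_inner_comm, hb, map_sub, hfx]; linarith [hfL y hy]
  have hb0 : b ≠ 0 := by
    obtain ⟨q, hq⟩ := hLint
    intro h0
    have := hf_int q hq
    rw [← hb, ← hfx, ← hb, h0, inner_zero_left, inner_zero_left] at this
    exact lt_irrefl _ this
  have := hx.inner_neg ha hb_normal hb0 hz
  rw [real_inner_comm, hb] at this
  linarith

end OuterNormal

section MaximalSimplex

variable {n : ℕ} {L : Set (Euc n)} {x : Fin (n + 1) → Euc n}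

lemma exists_isMaxOn_det_vertexMatrix (hLc : IsCompact L) (hLint : (interior L).Nonempty) :
    ∃ x ∈ univ.pi fun _ => L,
      IsMaxOn (fun y => (vertexMatrix y).det) (univ.pi fun _ => L) x ∧
        0 < (vertexMatrix x).det := by
  obtain ⟨c, hc⟩ := hLint
  obtain ⟨r, hr, hball⟩ := Metric.isOpen_iff.1 isOpen_interior c hc
  set q : Fin (n + 1) → Euc n := fun i => (r / 2) • stdVertices n i + c
  have hq : q ∈ univ.pi fun _ => L := fun i _ => interior_subset <| hball <| by
    rw [Metric.mem_ball, dist_eq_norm, add_sub_cancel_right, norm_smul,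
      Real.norm_of_nonneg (by positivity)]
    nlinarith [norm_stdVertices_le_one i]
  have hq_pos : 0 < (vertexMatrix q).det := by
    rw [det_vertexMatrix_smul_add, det_vertexMatrix_stdVertices, mul_one]; positivity
  obtain ⟨x, hx, hmax⟩ := (isCompact_univ_pi fun _ => hLc).exists_isMaxOn ⟨q, hq⟩
    continuous_det_vertexMatrix.continuousOn
  exact ⟨x, hx, hmax, hq_pos.trans_le (hmax hq)⟩

lemma isOuterNormal_detGrad (hx : x ∈ univ.pi fun _ => L)
    (hmax : IsMaxOn (fun y => (vertexMatrix y).det) (univ.pi fun _ => L) x) (i : Fin (n + 1)) :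
    IsOuterNormal L (x i) (detGrad x i) := fun y hy => by
  have hy' : Function.update x i y ∈ univ.pi fun _ => L := by
    intro j _
    rcases eq_or_ne j i with rfl | hj
    · simpa using hy
    · simpa [hj] using hx j trivial
  rw [real_inner_comm, ← det_update_sub_det_update, Function.update_eq_self]
  exact sub_nonpos.2 (hmax hy')

lemma detGrad_ne_zero (hn : 1 ≤ n) (hx : (vertexMatrix x).det ≠ 0) (i : Fin (n + 1)) :
    detGrad x i ≠ 0 := by
  have : Nontrivial (Fin (n + 1)) := Fin.nontrivial_iff_two_le.2 (by omega)
  obtain ⟨j, hj⟩ := exists_ne i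
  intro h
  have := inner_detGrad_sub x i i j
  rw [h, inner_zero_left, if_pos rfl, if_neg hj.symm, sub_zero] at this
  exact hx this.symm

lemma exists_inner_add_smul_detGrad_neg (hx : 0 < (vertexMatrix x).det) {u : Euc n}
    (hu : u ≠ 0) : ∃ z : Euc n, ∀ i, ∃ c : ℝ, ⟪z + c • u, detGrad x i⟫ < 0 := by
  obtain ⟨i₀, hi₀⟩ : ∃ i₀, ⟪detGrad x i₀, u⟫ ≠ 0 := by
    by_contra! h
    exact hu (eq_zero_of_forall_inner_detGrad_eq_zero hx.ne' h)
  refine ⟨∑ m, (x i₀ - x m), fun i => ?_⟩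
  rcases eq_or_ne i i₀ with rfl | hi
  · refine ⟨-(⟪detGrad x i, ∑ m, (x i - x m)⟫ + 1) / ⟪detGrad x i, u⟫, ?_⟩
    rw [real_inner_comm, inner_add_right, inner_smul_right, div_mul_cancel₀ _ hi₀]
    linarith
  · have : ⟪detGrad x i, ∑ m, (x i₀ - x m)⟫ = -(vertexMatrix x).det := by
      simp only [inner_sum, inner_detGrad_sub, if_neg hi, zero_sub, Finset.sum_neg_distrib,
        Finset.sum_ite_eq, Finset.mem_univ, if_true]
    refine ⟨0, ?_⟩
    rw [zero_smul, add_zero, real_inner_comm, this]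
    linarith

lemma not_exists_transl_convexHull_smul_subset (hn : 1 ≤ n)
    (hmax : IsMaxOn (fun y => (vertexMatrix y).det) (univ.pi fun _ => L) x)
    (hx : 0 < (vertexMatrix x).det) {s : ℝ} (hs : 1 < s) :
    ¬ ∃ v, transl (convexHull ℝ (range fun i => s • x i)) v ⊆ L := by
  rintro ⟨v, hv⟩
  have hmem : (fun i => s • x i + v) ∈ univ.pi fun _ => L := fun i _ =>
    hv ⟨_, subset_convexHull ℝ _ (mem_range_self i), rfl⟩
  have hle : s ^ n * (vertexMatrix x).det ≤ (vertexMatrix x).det := by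
    simpa [det_vertexMatrix_smul_add] using hmax hmem
  have : 1 < s ^ n := one_lt_pow₀ hs (by omega)
  nlinarith

end MaximalSimplex

lemma IsCompact.exists_gt_forall_of_eventually {X : Type*} [TopologicalSpace X] {K : Set X}
    (hK : IsCompact K) {P : ℝ → X → Prop} {s₀ : ℝ}
    (h : ∀ u ∈ K, ∀ᶠ q : ℝ × X in 𝓝 (s₀, u), P q.1 q.2) : ∃ s > s₀, ∀ u ∈ K, P s u := by
  have h' : ∀ᶠ s in 𝓝[>] s₀, ∀ u ∈ K, P s u :=
    (hK.eventually_forall_of_forall_eventually h).filter_mono nhdsWithin_le_nhds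
  obtain ⟨s, hs, hs₀⟩ := (h'.and self_mem_nhdsWithin).exists
  exact ⟨s, hs₀, hs⟩

section Fitting

variable {n : ℕ} {L : Set (Euc n)} {ι : Type*}

lemma exists_add_add_smul_mem_interior [Finite ι] (hLv : Convex ℝ L)
    (hLint : (interior L).Nonempty) {x a : ι → Euc n} (hreg : ∀ i, IsRegularPoint L (x i))
    (hxL : ∀ i, x i ∈ L) (ha : ∀ i, IsOuterNormal L (x i) (a i)) {u : Euc n}
    (hz : ∃ z : Euc n, ∀ i, ∃ c : ℝ, ⟪z + c • u, a i⟫ < 0) :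
    ∃ v, ∀ i, ∃ t : ℝ, x i + v + t • u ∈ interior L := by
  obtain ⟨z, hz⟩ := hz
  choose c hc using hz
  have h : ∀ᶠ δ in 𝓝[>] (0 : ℝ), ∀ i, x i + δ • (z + c i • u) ∈ interior L :=
    eventually_all.2 fun i =>
      (hreg i).eventually_add_smul_mem_interior hLv hLint (hxL i) (ha i) (hc i)
  obtain ⟨δ, hδ⟩ := h.exists
  exact ⟨δ • z, fun i => ⟨δ * c i, by simpa [smul_add, mul_smul, add_assoc] using hδ i⟩⟩

lemma eventually_smul_add_add_smul_mem_interior [Finite ι] {x : ι → Euc n} {u : Euc n}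
    (h : ∃ v, ∀ i, ∃ t : ℝ, x i + v + t • u ∈ interior L) :
    ∀ᶠ q : ℝ × Euc n in 𝓝 (1, u), ∃ v, ∀ i, ∃ t : ℝ, q.1 • x i + v + t • q.2 ∈ interior L := by
  obtain ⟨v, hv⟩ := h
  choose t ht using hv
  have hnear : ∀ i, ∀ᶠ q : ℝ × Euc n in 𝓝 (1, u), q.1 • x i + v + t i • q.2 ∈ interior L :=
    fun i => (by fun_prop : Continuous fun q : ℝ × Euc n => q.1 • x i + v + t i • q.2)
      |>.continuousAt.eventually_mem (isOpen_interior.mem_nhds (by simpa using ht i))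
  filter_upwards [eventually_all.2 hnear] with q hq
  exact ⟨v, fun i => ⟨t i, hq i⟩⟩

lemma transl_projSet_convexHull_subset {ξ : Submodule ℝ (Euc n)} (hLv : Convex ℝ L)
    {p : ι → Euc n} {v : Euc n} (h : ∀ i, ∃ w ∈ ξᗮ, p i + v + w ∈ L) :
    transl (projSet ξ (convexHull ℝ (range p))) (ξ.starProjection v) ⊆ projSet ξ L := by
  set P := ξ.starProjection
  have hproj : ∀ K, projSet ξ K = P '' K := fun K => rfl
  rw [hproj, hproj, transl, image_image, image_subset_iff]
  refine convexHull_min ?_ (((hLv.linear_image P.toLinearMap).translate_preimage_left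
    (P v)).linear_preimage P.toLinearMap)
  rintro _ ⟨i, rfl⟩
  obtain ⟨w, hw, hmem⟩ := h i
  refine ⟨_, hmem, ?_⟩
  simp [P, ξ.starProjection_apply_eq_zero_iff.2 hw]

end Fitting

/-- A smooth convex body is not reliable: there is an n-simplex S each of whose shadows
can be translated into the corresponding shadow of L, while no translate of S fits
inside L. -/
theorem smooth_body_not_reliable {n : ℕ} (hn : 1 ≤ n)
    (L : Set (Euc n)) (hLc : IsCompact L) (hLv : Convex ℝ L)
    (hLint : (interior L).Nonempty)
    (hsmooth : ∀ x ∈ frontier L, IsRegularPoint L x) :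
    ∃ S : Set (Euc n), IsSimplexOfDim n S ∧
      (∀ u : Euc n, ‖u‖ = 1 →
        ∃ w, transl (projSet (ℝ ∙ u)ᗮ S) w ⊆ projSet (ℝ ∙ u)ᗮ L) ∧
      ¬ ∃ v, transl S v ⊆ L := by
  obtain ⟨x, hxL, hmax, hx⟩ := exists_isMaxOn_det_vertexMatrix hLc hLint
  have hnormal := isOuterNormal_detGrad hxL hmax
  have hreg : ∀ i, IsRegularPoint L (x i) := fun i => hsmooth _ <| by
    rw [hLc.isClosed.frontier_eq]
    exact ⟨hxL i trivial, (hnormal i).notMem_interior (detGrad_ne_zero hn hx.ne' i)⟩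
  obtain ⟨s, hs, hfit⟩ : ∃ s > 1, ∀ u ∈ Metric.sphere (0 : Euc n) 1,
      ∃ v, ∀ i, ∃ t : ℝ, s • x i + v + t • u ∈ interior L :=
    (isCompact_sphere 0 1).exists_gt_forall_of_eventually fun u hu =>
      eventually_smul_add_add_smul_mem_interior <|
        exists_add_add_smul_mem_interior hLv hLint hreg (fun i => hxL i trivial) hnormal <|
          exists_inner_add_smul_detGrad_neg hx (Metric.ne_of_mem_sphere hu one_ne_zero)
  have hdet : (vertexMatrix fun i => s • x i).det ≠ 0 := by
    simpa using (det_vertexMatrix_smul_add x s 0).trans_ne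
      (mul_pos (pow_pos (by linarith) n) hx).ne'
  refine ⟨convexHull ℝ (range fun i => s • x i), ⟨_, affineIndependent_of_det_ne_zero hdet, rfl⟩,
    fun u hu => ?_, not_exists_transl_convexHull_smul_subset hn hmax hx hs⟩
  obtain ⟨v, hv⟩ := hfit u (mem_sphere_zero_iff_norm.2 hu)
  refine ⟨_, transl_projSet_convexHull_subset (v := v) hLv fun i => ?_⟩
  obtain ⟨t, ht⟩ := hv i
  exact ⟨t • u, Submodule.smul_mem _ _
    (Submodule.le_orthogonal_orthogonal _ (Submodule.mem_span_singleton_self u)),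
    interior_subset ht⟩
end
end

section
/- Let P be a convex polytope in ℝⁿ with nonempty interior, and let ξ be a proper nonzero linear subspace of ℝⁿ such that every outer unit facet normal of P lies either in ξ or in ξ^⊥. Then there exist polytopes P₁ ⊆ ξ and P₂ ⊆ ξ^⊥ such that P is a translate of the Minkowski sum P₁ + P₂. -/
open scoped Pointwise RealInnerProductSpace
noncomputable section

/-! Write `P = conv S` and let `π`, `π'` be the orthogonal projections onto `ξ` and `ξᗮ`; then
`P ⊆ π P + π' P` because `x = π x + π' x`. For the converse we use that a full-dimensional
polytope is cut out by its facet halfspaces: for `z ∉ P`, walk from an interior point towards `z`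
until leaving `P`, take a supporting hyperplane there, and tilt it about its face until that face
is a facet. If `π a + π' b` were outside `P`, a separating facet normal `u` would lie in `ξ` or in
`ξᗮ`, so `⟪π a + π' b, u⟫` would be `⟪a, u⟫` or `⟪b, u⟫`, which is not larger than on `P`. -/

section
variable {E : Type*} [NormedAddCommGroup E] [InnerProductSpace ℝ E]

lemma vectorSpan_le_orthogonal_of_inner_eq {s : Set E} {u : E} {c : ℝ}
    (h : ∀ x ∈ s, ⟪x, u⟫ = c) : vectorSpan ℝ s ≤ (ℝ ∙ u)ᗮ := by
  rw [vectorSpan_def, Submodule.span_le]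
  rintro _ ⟨x, hx, y, hy, rfl⟩
  simp only [SetLike.mem_coe, Submodule.mem_orthogonal_singleton_iff_inner_left, vsub_eq_sub,
    inner_sub_left, h x hx, h y hy, sub_self]

lemma inner_le_of_mem_convexHull {s : Set E} {u : E} {c : ℝ} (h : ∀ x ∈ s, ⟪x, u⟫ ≤ c)
    {y : E} (hy : y ∈ convexHull ℝ s) : ⟪y, u⟫ ≤ c :=
  convexHull_min h (convex_halfSpace_le ⟨fun x y => inner_add_left x y u,
    fun r x => real_inner_smul_left x u r⟩ c) hy

lemma exists_inner_lt_of_mem_interior {P : Set E} {p u : E} (hp : p ∈ interior P)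
    (hu : u ≠ 0) : ∃ y ∈ P, ⟪p, u⟫ < ⟪y, u⟫ := by
  have hline : Filter.Tendsto (fun t : ℝ => p + t • u) (nhdsWithin 0 (Set.Ioi 0)) (nhds p) :=
    tendsto_nhdsWithin_of_tendsto_nhds
      ((by fun_prop : Continuous fun t : ℝ => p + t • u).tendsto' 0 p (by simp))
  obtain ⟨t, htP, ht⟩ := ((hline.eventually (mem_interior_iff_mem_nhds.mp hp)).and
    self_mem_nhdsWithin).exists
  refine ⟨_, htP, ?_⟩
  rw [inner_add_left, real_inner_smul_left, real_inner_self_eq_norm_sq]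
  have : 0 < t * ‖u‖ ^ 2 := mul_pos ht (by positivity)
  linarith

lemma exists_supporting_inner_le [CompleteSpace E] {P : Set E} (hconv : Convex ℝ P)
    (hint : (interior P).Nonempty) {b : E} (hb : b ∉ interior P) :
    ∃ u ≠ 0, ∀ y ∈ P, ⟪y, u⟫ ≤ ⟪b, u⟫ := by
  obtain ⟨f, c, hf, hP, hb⟩ := geometric_hahn_banach_of_nonempty_interior hconv
    (convex_singleton b) (Set.disjoint_singleton_right.mpr hb) hint (Set.singleton_nonempty b)
  refine ⟨(InnerProductSpace.toDual ℝ E).symm f, by simpa using hf, fun y hy => ?_⟩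
  simp only [real_inner_comm _ y, real_inner_comm _ b, InnerProductSpace.toDual_symm_apply]
  exact (hP y hy).trans (hb b rfl)

lemma exists_mem_segment_diff_interior {P : Set E} (hcl : IsClosed P) {p z : E}
    (hp : p ∈ interior P) (hz : z ∉ P) : ∃ b ∈ segment ℝ p z, b ∈ P ∧ b ∉ interior P := by
  by_contra! h
  obtain ⟨x, -, hx, hxc⟩ := (convex_segment p z).isPreconnected _ _ isOpen_interior
    hcl.isOpen_compl (fun x hx => (em (x ∈ P)).imp (h x hx) id)
    ⟨p, left_mem_segment ℝ p z, hp⟩ ⟨z, right_mem_segment ℝ p z, hz⟩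
  exact hxc (interior_subset hx)

variable (K : Submodule ℝ E) [K.HasOrthogonalProjection]

lemma inner_starProjection_add_starProjection_orthogonal_of_mem {x y u : E} (hu : u ∈ K) :
    ⟪K.starProjection x + Kᗮ.starProjection y, u⟫ = ⟪x, u⟫ := by
  rw [inner_add_left, Submodule.inner_starProjection_left_eq_right,
    Submodule.inner_starProjection_left_eq_right, Submodule.starProjection_eq_self_iff.mpr hu,
    Submodule.starProjection_orthogonal_apply_eq_zero hu, inner_zero_right, add_zero]

lemma inner_starProjection_add_starProjection_orthogonal_of_mem_orthogonal {x y u : E}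
    (hu : u ∈ Kᗮ) : ⟪K.starProjection x + Kᗮ.starProjection y, u⟫ = ⟪y, u⟫ := by
  rw [inner_add_left, Submodule.inner_starProjection_left_eq_right,
    Submodule.inner_starProjection_left_eq_right, Submodule.starProjection_eq_self_iff.mpr hu,
    (K.starProjection_apply_eq_zero_iff).mpr hu, inner_zero_right, zero_add]

lemma image_starProjection_add_image_starProjection_orthogonal {P : Set E}
    (hsep : ∀ z ∉ P, ∃ u, (u ∈ K ∨ u ∈ Kᗮ) ∧ ∀ y ∈ P, ⟪y, u⟫ < ⟪z, u⟫) :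
    K.starProjection '' P + Kᗮ.starProjection '' P = P := by
  refine subset_antisymm ?_ fun x hx =>
    ⟨_, ⟨x, hx, rfl⟩, _, ⟨x, hx, rfl⟩, K.starProjection_add_starProjection_orthogonal x⟩
  rintro _ ⟨_, ⟨x, hx, rfl⟩, _, ⟨y, hy, rfl⟩, rfl⟩
  by_contra hz
  obtain ⟨u, hu | hu, hlt⟩ := hsep _ hz
  · exact (hlt x hx).ne (inner_starProjection_add_starProjection_orthogonal_of_mem K hu).symm
  · exact (hlt y hy).ne
      (inner_starProjection_add_starProjection_orthogonal_of_mem_orthogonal K hu).symm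

end

section

open Module

variable {n : ℕ}

lemma finrank_vectorSpan_supportSet_add_one_le {P : Set (Euc n)} {u : Euc n} (hu : u ≠ 0) :
    finrank ℝ (vectorSpan ℝ (supportSet P u)) + 1 ≤ n := by
  have hle : vectorSpan ℝ (supportSet P u) ≤ (ℝ ∙ u)ᗮ := by
    obtain hF | ⟨x₀, hx₀⟩ := (supportSet P u).eq_empty_or_nonempty
    · simp [hF]
    exact vectorSpan_le_orthogonal_of_inner_eq fun x hx =>
      le_antisymm (hx₀.2 x hx.1) (hx.2 x₀ hx₀.1)
  have := (ℝ ∙ u).finrank_add_finrank_orthogonal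
  rw [finrank_span_singleton hu, finrank_euclideanSpace_fin] at this
  have := Submodule.finrank_mono hle
  omega

lemma supportSet_smul (P : Set (Euc n)) {r : ℝ} (hr : 0 < r) (u : Euc n) :
    supportSet P (r • u) = supportSet P u := by
  simp only [supportSet, real_inner_smul_right, mul_le_mul_iff_right₀ hr]

lemma mem_supportSet_convexHull {S : Set (Euc n)} {u x : Euc n} (hx : x ∈ convexHull ℝ S)
    (h : ∀ s ∈ S, ⟪s, u⟫ ≤ ⟪x, u⟫) : x ∈ supportSet (convexHull ℝ S) u :=
  ⟨hx, fun _ hy => inner_le_of_mem_convexHull h hy⟩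

lemma exists_tilted_supportSet {S : Finset (Euc n)} {u w x₀ x₁ : Euc n} (hu : u ≠ 0)
    (hx₀ : x₀ ∈ supportSet (convexHull ℝ S) u)
    (hw : w ∈ (vectorSpan ℝ (supportSet (convexHull ℝ S) u) ⊔ ℝ ∙ u)ᗮ)
    (hx₁ : x₁ ∈ S) (hlt : ⟪x₀, w⟫ < ⟪x₁, w⟫) :
    ∃ u' ≠ 0, supportSet (convexHull ℝ S) u ⊆ supportSet (convexHull ℝ S) u' ∧
      vectorSpan ℝ (supportSet (convexHull ℝ S) u) <
        vectorSpan ℝ (supportSet (convexHull ℝ S) u') := by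
  set F := supportSet (convexHull ℝ S) u
  have hSP : ∀ x ∈ S, x ∈ convexHull ℝ (S : Set (Euc n)) := fun x hx =>
    subset_convexHull ℝ _ hx
  have huw : ⟪u, w⟫ = 0 := (Submodule.mem_orthogonal _ _).mp hw u
    (Submodule.mem_sup_right (Submodule.mem_span_singleton_self u))
  have hVw : ∀ v ∈ vectorSpan ℝ F, ⟪v, w⟫ = 0 := fun v hv =>
    (Submodule.mem_orthogonal _ _).mp hw v (Submodule.mem_sup_left hv)
  have hFw : ∀ f ∈ F, ⟪f, w⟫ = ⟪x₀, w⟫ := fun f hf => by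
    have := hVw _ (vsub_mem_vectorSpan ℝ hf hx₀)
    rwa [vsub_eq_sub, inner_sub_left, sub_eq_zero] at this
  set T := S.filter fun x => ⟪x₀, w⟫ < ⟪x, w⟫
  have hT : ∀ x ∈ T, ⟪x, u⟫ < ⟪x₀, u⟫ := fun x hx => by
    obtain ⟨hxS, hxw⟩ := Finset.mem_filter.mp hx
    refine (hx₀.2 x (hSP x hxS)).lt_of_ne fun h => hxw.ne' (hFw x ⟨hSP x hxS, ?_⟩)
    exact fun y hy => h ▸ hx₀.2 y hy
  -- `t` is the largest tilt towards `w` that keeps all of `S` below the level of `x₀`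
  set g : Euc n → ℝ := fun x => (⟪x₀, u⟫ - ⟪x, u⟫) / (⟪x, w⟫ - ⟪x₀, w⟫)
  obtain ⟨xs, hxsT, hxs_min⟩ := T.exists_min_image g ⟨x₁, Finset.mem_filter.mpr ⟨hx₁, hlt⟩⟩
  obtain ⟨hxsS, hxsw⟩ := Finset.mem_filter.mp hxsT
  set t := g xs
  have ht : 0 < t := div_pos (sub_pos.mpr (hT xs hxsT)) (sub_pos.mpr hxsw)
  set u' := u + t • w
  have hval : ∀ y, ⟪y, u'⟫ = ⟪y, u⟫ + t * ⟪y, w⟫ := fun y => by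
    rw [inner_add_right, real_inner_smul_right]
  have hmax : ∀ x ∈ S, ⟪x, u'⟫ ≤ ⟪x₀, u'⟫ := fun x hx => by
    rw [hval, hval]
    rcases le_or_gt ⟪x, w⟫ ⟪x₀, w⟫ with h | h
    · nlinarith [hx₀.2 x (hSP x hx)]
    · have := hxs_min x (Finset.mem_filter.mpr ⟨hx, h⟩)
      rw [le_div_iff₀ (sub_pos.mpr h)] at this
      nlinarith
  have hsub : F ⊆ supportSet (convexHull ℝ S) u' := fun f hf =>
    mem_supportSet_convexHull hf.1 fun x hx => by
      have := hmax x hx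
      rw [hval x₀] at this
      rw [hval f, hFw f hf]
      linarith [hf.2 x₀ hx₀.1]
  have hxs : xs ∈ supportSet (convexHull ℝ S) u' := by
    refine mem_supportSet_convexHull (hSP xs hxsS) fun x hx => (hmax x hx).trans_eq ?_
    have : t * (⟪xs, w⟫ - ⟪x₀, w⟫) = ⟪x₀, u⟫ - ⟪xs, u⟫ :=
      div_mul_cancel₀ _ (sub_pos.mpr hxsw).ne'
    rw [hval, hval]
    linarith
  refine ⟨u', fun h => hu ?_, hsub, lt_of_le_of_ne (vectorSpan_mono ℝ hsub) fun h => ?_⟩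
  · have : ⟪u, u'⟫ = ‖u‖ ^ 2 := by
      rw [hval, real_inner_self_eq_norm_sq, huw, mul_zero, add_zero]
    rw [h, inner_zero_right] at this
    exact norm_eq_zero.mp (pow_eq_zero_iff two_ne_zero |>.mp this.symm)
  · have := hVw _ (h ▸ vsub_mem_vectorSpan ℝ hxs (hsub hx₀))
    rw [vsub_eq_sub, inner_sub_left, sub_eq_zero] at this
    exact hxsw.ne' this

lemma exists_larger_supportSet {S : Finset (Euc n)}
    (hspan : vectorSpan ℝ (S : Set (Euc n)) = ⊤) {u x₀ : Euc n} (hu : u ≠ 0)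
    (hx₀ : x₀ ∈ supportSet (convexHull ℝ S) u)
    (hdim : finrank ℝ (vectorSpan ℝ (supportSet (convexHull ℝ S) u)) + 1 < n) :
    ∃ u' ≠ 0, supportSet (convexHull ℝ S) u ⊆ supportSet (convexHull ℝ S) u' ∧
      vectorSpan ℝ (supportSet (convexHull ℝ S) u) <
        vectorSpan ℝ (supportSet (convexHull ℝ S) u') := by
  set W := vectorSpan ℝ (supportSet (convexHull ℝ S) u) ⊔ ℝ ∙ u
  have hW : finrank ℝ W < n := (Submodule.finrank_add_le_finrank_add_finrank _ _).trans_lt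
    (by rwa [finrank_span_singleton hu])
  obtain ⟨w, hwW, hw⟩ : ∃ w ∈ Wᗮ, w ≠ 0 := Submodule.exists_mem_ne_zero_of_ne_bot fun h => by
    have := W.finrank_add_finrank_orthogonal
    rw [h, finrank_bot, finrank_euclideanSpace_fin] at this
    omega
  obtain ⟨x₁, hx₁, hne⟩ : ∃ x₁ ∈ S, ⟪x₁, w⟫ ≠ ⟪x₀, w⟫ := by
    by_contra! h
    have := vectorSpan_le_orthogonal_of_inner_eq (s := (S : Set (Euc n))) h
    rw [hspan, top_le_iff, Submodule.orthogonal_eq_top_iff,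
      Submodule.span_singleton_eq_bot] at this
    exact hw this
  -- after scaling `w` by `⟪x₁ - x₀, w⟫` the gap between `x₁` and `x₀` is a positive square
  refine exists_tilted_supportSet hu hx₀ (Submodule.smul_mem _ (⟪x₁, w⟫ - ⟪x₀, w⟫) hwW) hx₁ ?_
  rw [real_inner_smul_right, real_inner_smul_right]
  nlinarith [sq_pos_of_ne_zero (sub_ne_zero.mpr hne)]

lemma exists_facet_supportSet_superset {S : Finset (Euc n)}
    (hspan : vectorSpan ℝ (S : Set (Euc n)) = ⊤) {u x₀ : Euc n} (hu : u ≠ 0)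
    (hx₀ : x₀ ∈ supportSet (convexHull ℝ S) u) :
    ∃ u' ≠ 0, supportSet (convexHull ℝ S) u ⊆ supportSet (convexHull ℝ S) u' ∧
      finrank ℝ (vectorSpan ℝ (supportSet (convexHull ℝ S) u')) + 1 = n := by
  induction hk : n - finrank ℝ (vectorSpan ℝ (supportSet (convexHull ℝ S) u))
    using Nat.strong_induction_on generalizing u with
  | _ k ih =>
    obtain heq | hlt :=
      (finrank_vectorSpan_supportSet_add_one_le (P := convexHull ℝ ↑S) hu).eq_or_lt
    · exact ⟨u, hu, subset_rfl, heq⟩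
    obtain ⟨u', hu', hsub, hV⟩ := exists_larger_supportSet hspan hu hx₀ hlt
    have := Submodule.finrank_lt_finrank_of_lt hV
    obtain ⟨u'', hu'', hsub', hdim⟩ := ih _ (by omega) hu' (hsub hx₀) rfl
    exact ⟨u'', hu'', hsub.trans hsub', hdim⟩

lemma exists_facetNormal_inner_lt {S : Finset (Euc n)}
    (hint : (interior (convexHull ℝ (S : Set (Euc n)))).Nonempty) {z : Euc n}
    (hz : z ∉ convexHull ℝ (S : Set (Euc n))) :
    ∃ u, IsFacetNormal (convexHull ℝ S) u ∧
      ∀ y ∈ convexHull ℝ (S : Set (Euc n)), ⟪y, u⟫ < ⟪z, u⟫ := by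
  set P := convexHull ℝ (S : Set (Euc n))
  have hspan : vectorSpan ℝ (S : Set (Euc n)) = ⊤ := by
    rw [← direction_affineSpan, interior_convexHull_nonempty_iff_affineSpan_eq_top.mp hint,
      AffineSubspace.direction_top]
  obtain ⟨p, hp⟩ := hint
  have hcl : IsClosed P := (S.finite_toSet.isCompact_convexHull (𝕜 := ℝ)).isClosed
  obtain ⟨b, hbpz, hbP, hb⟩ := exists_mem_segment_diff_interior hcl hp hz
  obtain ⟨u₀, hu₀, hbu₀⟩ := exists_supporting_inner_le (convex_convexHull ℝ _) ⟨p, hp⟩ hb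
  obtain ⟨u, hu, hsub, hdim⟩ := exists_facet_supportSet_superset hspan hu₀ ⟨hbP, hbu₀⟩
  have hû : supportSet P (‖u‖⁻¹ • u) = supportSet P u :=
    supportSet_smul P (inv_pos.mpr (norm_pos_iff.mpr hu)) u
  have hbû : b ∈ supportSet P (‖u‖⁻¹ • u) := hû ▸ hsub ⟨hbP, hbu₀⟩
  refine ⟨‖u‖⁻¹ • u, ⟨norm_smul_inv_norm hu, ?_⟩, fun y hy => (hbû.2 y hy).trans_lt ?_⟩
  · rw [hû, hdim, ← direction_affineSpan, affineSpan_convexHull, direction_affineSpan, hspan,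
      finrank_top, finrank_euclideanSpace_fin]
  · obtain ⟨y, hyP, hpy⟩ := exists_inner_lt_of_mem_interior hp
      (smul_ne_zero (inv_ne_zero (norm_ne_zero_iff.mpr hu)) hu)
    have hpb := hpy.trans_le (hbû.2 y hyP)
    obtain ⟨a, c, ha, hc, hac, rfl⟩ := mem_openSegment_of_ne_left_right
      (ne_of_mem_of_not_mem hp hb) (ne_of_mem_of_not_mem hbP hz).symm hbpz
    obtain rfl : a = 1 - c := eq_sub_of_add_eq hac
    rw [inner_add_left, real_inner_smul_left, real_inner_smul_left] at hpb ⊢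
    have hpz : ⟪p, ‖u‖⁻¹ • u⟫ < ⟪z, ‖u‖⁻¹ • u⟫ := lt_of_mul_lt_mul_left (by nlinarith) hc.le
    nlinarith [mul_lt_mul_of_pos_left hpz ha]

end

theorem polytope_splits_along_normals_general {n : ℕ} (P : Set (Euc n))
    (hP : ∃ S : Finset (Euc n), P = convexHull ℝ (S : Set (Euc n)))
    (hint : (interior P).Nonempty)
    (ξ : Submodule ℝ (Euc n))
    (hnormals : ∀ u : Euc n, IsFacetNormal P u → u ∈ ξ ∨ u ∈ ξᗮ) :
    ∃ P₁ P₂ : Set (Euc n),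
      (∃ S₁ : Finset (Euc n), S₁.Nonempty ∧ P₁ = convexHull ℝ (S₁ : Set (Euc n))) ∧
      (∃ S₂ : Finset (Euc n), S₂.Nonempty ∧ P₂ = convexHull ℝ (S₂ : Set (Euc n))) ∧
      P₁ ⊆ (ξ : Set (Euc n)) ∧ P₂ ⊆ (ξᗮ : Set (Euc n)) ∧
      ∃ v : Euc n, P = transl (P₁ + P₂) v := by
  obtain ⟨S, rfl⟩ := hP
  have hS : S.Nonempty := Finset.nonempty_iff_ne_empty.mpr fun h => by simp [h] at hint
  have hproj (K : Submodule ℝ (Euc n)) : K.starProjection '' convexHull ℝ S =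
      convexHull ℝ ↑(S.image K.starProjection) := by
    rw [Finset.coe_image]
    exact K.starProjection.toLinearMap.image_convexHull _
  refine ⟨_, _, ⟨_, hS.image _, hproj ξ⟩, ⟨_, hS.image _, hproj ξᗮ⟩,
    Set.image_subset_iff.mpr fun x _ => ξ.starProjection_apply_mem x,
    Set.image_subset_iff.mpr fun x _ => ξᗮ.starProjection_apply_mem x, 0, ?_⟩
  rw [transl, image_starProjection_add_image_starProjection_orthogonal ξ fun z hz => ?_]
  · simp
  obtain ⟨u, hu, hlt⟩ := exists_facetNormal_inner_lt hint hz
  exact ⟨u, hnormals u hu, hlt⟩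

/-- If every outer unit facet normal of a full-dimensional convex polytope P lies in a
proper nonzero subspace ξ or in its orthogonal complement ξ^⊥, then P is a translate of a
Minkowski sum P₁ + P₂ of polytopes P₁ ⊆ ξ and P₂ ⊆ ξ^⊥. -/
theorem polytope_splits_along_normals {n : ℕ} (P : Set (Euc n))
    (hP : ∃ S : Finset (Euc n), P = convexHull ℝ (S : Set (Euc n)))
    (hint : (interior P).Nonempty)
    (ξ : Submodule ℝ (Euc n)) (hbot : ξ ≠ ⊥) (htop : ξ ≠ ⊤)
    (hnormals : ∀ u : Euc n, IsFacetNormal P u → u ∈ ξ ∨ u ∈ ξᗮ) :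
    ∃ P₁ P₂ : Set (Euc n),
      (∃ S₁ : Finset (Euc n), S₁.Nonempty ∧ P₁ = convexHull ℝ (S₁ : Set (Euc n))) ∧
      (∃ S₂ : Finset (Euc n), S₂.Nonempty ∧ P₂ = convexHull ℝ (S₂ : Set (Euc n))) ∧
      P₁ ⊆ (ξ : Set (Euc n)) ∧ P₂ ⊆ (ξᗮ : Set (Euc n)) ∧
      ∃ v : Euc n, P = transl (P₁ + P₂) v :=
  polytope_splits_along_normals_general P hP hint ξ hnormals
end
end

section
/- Let T be a regular tetrahedron in ℝ³ with edge length √3 and let B be the closed Euclidean unit ball in ℝ³. Then for every unit vector u, the orthogonal projection B_u (a disk of unit radius, hence containing a disk of unit diameter) contains a translate of the projection T_u; nevertheless, B does not contain any translate of T. -/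
open scoped Pointwise RealInnerProductSpace
noncomputable section

/-!
Orthogonal projection does not increase distances, so the vertices of every shadow of `T` are
pairwise at distance at most `√3`. In the plane, any three such points lie in a unit disk
(Jung's theorem for triangles: the midpoint of the longest side or the circumcenter, whose
circumradius `a / (2 sin α)` is at most `1` because the largest angle `α` is at least `π / 3`),
so by Helly's theorem the four unit disks around the projected vertices share a point, and the
shadow of `T` fits in the unit disk around it. On the other hand, for points `w₀, …, w₃` of the
unit ball the six squared distances `‖wᵢ - wⱼ‖²` sum to `4 ∑ ‖wᵢ‖² - ‖∑ wᵢ‖² ≤ 16`, while for the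
vertices of a translate of `T` they sum to `18`.
-/

section Jung

variable {V : Type*} [NormedAddCommGroup V] [InnerProductSpace ℝ V]

/-- With `E = ‖e‖²`, `F = ⟪e, f⟫`, `G = ‖f‖²` for the edges `e, f` of an acute triangle, the left
side divided by `4 (E G - F²)` is its squared circumradius. -/
lemma circumradius_sq_le {E F G ρ : ℝ} (hF : 0 < F) (hFE : F < E) (hFG : F < G)
    (hE : E ≤ 3 * ρ) (hG : G ≤ 3 * ρ) (hEG : E + G - 2 * F ≤ 3 * ρ) :
    E * G * (E + G - 2 * F) ≤ 4 * ρ * (E * G - F ^ 2) := by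
  nlinarith [mul_pos (sub_pos.2 hFE) (sub_pos.2 hFG), mul_nonneg (sub_nonneg.2 hE) (sub_nonneg.2 hG),
    mul_pos hF (sub_pos.2 hFE), mul_pos hF (sub_pos.2 hFG), sq_nonneg (E - G),
    sq_nonneg (E + G - 2 * F), mul_nonneg (mul_nonneg (sub_nonneg.2 hE) (sub_nonneg.2 hG)) hF.le,
    mul_nonneg (sub_nonneg.2 hEG) (mul_pos (sub_pos.2 hFE) (sub_pos.2 hFG)).le,
    mul_nonneg (sub_nonneg.2 hEG) (mul_pos hF (sub_pos.2 hFE)).le,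
    mul_nonneg (sub_nonneg.2 hEG) (mul_pos hF (sub_pos.2 hFG)).le]

/-- The three quadratic forms are the squared distances from `a + β e + γ f` to the vertices
`a`, `a + e`, `a + f` when `E, F, G` is the Gram data of `e, f`. -/
lemma exists_coeffs_forall_sq_dist_le {E F G ρ : ℝ} (hE₀ : 0 ≤ E) (hE : E ≤ 3 * ρ)
    (hG : G ≤ 3 * ρ) (hEG : E + G - 2 * F ≤ 3 * ρ) :
    ∃ β γ : ℝ, β ^ 2 * E + 2 * β * γ * F + γ ^ 2 * G ≤ ρ ∧
      (β - 1) ^ 2 * E + 2 * (β - 1) * γ * F + γ ^ 2 * G ≤ ρ ∧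
      β ^ 2 * E + 2 * β * (γ - 1) * F + (γ - 1) ^ 2 * G ≤ ρ := by
  -- At a non-acute angle, the midpoint of the opposite side works.
  rcases le_or_gt F 0 with hF | hF
  · exact ⟨1 / 2, 1 / 2, by nlinarith, by nlinarith, by nlinarith⟩
  rcases le_or_gt E F with hFE | hFE
  · exact ⟨0, 1 / 2, by nlinarith, by nlinarith, by nlinarith⟩
  rcases le_or_gt G F with hFG | hFG
  · exact ⟨1 / 2, 0, by nlinarith, by nlinarith, by nlinarith⟩
  set D := E * G - F ^ 2 with hD
  have hD₀ : 0 < D := by nlinarith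
  have hR : E * G * (E + G - 2 * F) / (4 * D) ≤ ρ := by
    rw [div_le_iff₀ (by positivity)]
    linarith [circumradius_sq_le hF hFE hFG hE hG hEG]
  refine ⟨G * (E - F) / (2 * D), E * (G - F) / (2 * D), ?_, ?_, ?_⟩ <;>
  · refine le_of_eq_of_le ?_ hR
    field_simp
    rw [hD]
    ring

lemma norm_smul_add_smul_sq (β γ : ℝ) (e f : V) :
    ‖β • e + γ • f‖ ^ 2 = β ^ 2 * ‖e‖ ^ 2 + 2 * β * γ * ⟪e, f⟫ + γ ^ 2 * ‖f‖ ^ 2 := by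
  rw [norm_add_sq_real, real_inner_smul_left, real_inner_smul_right, norm_smul, norm_smul,
    mul_pow, mul_pow, Real.norm_eq_abs, Real.norm_eq_abs, sq_abs, sq_abs]
  ring

/-- Jung's theorem for triangles. -/
theorem exists_dist_le_of_dist_le_sqrt_three_mul {a b c : V} {r : ℝ}
    (hab : dist a b ≤ √3 * r) (hac : dist a c ≤ √3 * r) (hbc : dist b c ≤ √3 * r) :
    ∃ z, dist a z ≤ r ∧ dist b z ≤ r ∧ dist c z ≤ r := by
  have hr : 0 ≤ r := nonneg_of_mul_nonneg_right (dist_nonneg.trans hab) (by positivity)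
  have sq_le {x y : V} (h : dist x y ≤ √3 * r) : ‖y - x‖ ^ 2 ≤ 3 * r ^ 2 := by
    rw [← dist_eq_norm', ← Real.sq_sqrt (show (0 : ℝ) ≤ 3 by norm_num), ← mul_pow]
    gcongr
  have dist_le {x y : V} (h : ‖x - y‖ ^ 2 ≤ r ^ 2) : dist x y ≤ r := by
    rw [dist_eq_norm]
    exact (pow_le_pow_iff_left₀ (norm_nonneg _) hr two_ne_zero).1 h
  have hEG : ‖b - a‖ ^ 2 + ‖c - a‖ ^ 2 - 2 * ⟪b - a, c - a⟫ = ‖c - b‖ ^ 2 := by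
    rw [show c - b = (c - a) - (b - a) by abel]
    linarith [norm_sub_sq_real (c - a) (b - a), real_inner_comm (b - a) (c - a)]
  obtain ⟨β, γ, ha, hb, hc⟩ := exists_coeffs_forall_sq_dist_le (sq_nonneg ‖b - a‖)
    (sq_le hab) (sq_le hac) (hEG ▸ sq_le hbc)
  refine ⟨a + β • (b - a) + γ • (c - a), dist_le ?_, dist_le ?_, dist_le ?_⟩
  · rwa [show a - (a + β • (b - a) + γ • (c - a)) = -(β • (b - a) + γ • (c - a)) by abel,
      norm_neg, norm_smul_add_smul_sq]
  · rwa [show b - (a + β • (b - a) + γ • (c - a)) = -((β - 1) • (b - a) + γ • (c - a)) by module,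
      norm_neg, norm_smul_add_smul_sq]
  · rwa [show c - (a + β • (b - a) + γ • (c - a)) = -(β • (b - a) + (γ - 1) • (c - a)) by module,
      norm_neg, norm_smul_add_smul_sq]

lemma Finset.exists_subset_triple_of_card_le_three {α : Type*} [DecidableEq α] {s : Finset α}
    (hs : s.Nonempty) (h : s.card ≤ 3) : ∃ a b c : α, s ⊆ {a, b, c} := by
  have := hs.card_pos
  obtain h | h | h : s.card = 1 ∨ s.card = 2 ∨ s.card = 3 := by omega
  · obtain ⟨a, rfl⟩ := Finset.card_eq_one.1 h
    exact ⟨a, a, a, by simp⟩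
  · obtain ⟨a, b, -, rfl⟩ := Finset.card_eq_two.1 h
    exact ⟨a, a, b, by simp⟩
  · obtain ⟨a, b, c, -, -, -, rfl⟩ := Finset.card_eq_three.1 h
    exact ⟨a, b, c, subset_rfl⟩

/-- Jung's theorem in the plane. -/
theorem exists_forall_dist_le_of_finrank_le_two [FiniteDimensional ℝ V]
    (hV : Module.finrank ℝ V ≤ 2) {ι : Type*} (x : ι → V) {r : ℝ}
    (hx : ∀ i j, dist (x i) (x j) ≤ √3 * r) : ∃ z, ∀ i, dist (x i) z ≤ r := by
  classical
  obtain ⟨z, hz⟩ := Convex.helly_theorem_compact' (𝕜 := ℝ)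
    (F := fun i ↦ Metric.closedBall (x i) r) (fun _ ↦ convex_closedBall _ _)
    (fun _ ↦ isCompact_closedBall _ _) fun I hI ↦ by
      rcases I.eq_empty_or_nonempty with rfl | hne
      · simp
      obtain ⟨a, b, c, habc⟩ := Finset.exists_subset_triple_of_card_le_three hne (by omega)
      obtain ⟨z, ha, hb, hc⟩ := exists_dist_le_of_dist_le_sqrt_three_mul (hx a b) (hx a c) (hx b c)
      refine ⟨z, Set.mem_iInter₂.2 fun i hi ↦ ?_⟩
      rw [Metric.mem_closedBall, dist_comm]
      rcases Finset.mem_insert.1 (habc hi) with rfl | hi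
      · exact ha
      rcases Finset.mem_insert.1 hi with rfl | hi
      · exact hb
      rw [Finset.mem_singleton.1 hi]
      exact hc
  exact ⟨z, fun i ↦ by simpa [dist_comm] using Set.mem_iInter.1 hz i⟩

end Jung

section Shadows

variable {n : ℕ} (ξ : Submodule ℝ (Euc n))

lemma projSet_convexHull (s : Set (Euc n)) :
    projSet ξ (convexHull ℝ s) = convexHull ℝ (projSet ξ s) :=
  (ξ.subtype ∘ₗ ξ.orthogonalProjectionOnto.toLinearMap).image_convexHull s

lemma inter_closedBall_zero_subset_projSet (r : ℝ) :
    (ξ : Set (Euc n)) ∩ Metric.closedBall 0 r ⊆ projSet ξ (Metric.closedBall 0 r) :=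
  fun y ⟨hy, hyr⟩ ↦ ⟨y, hyr, ξ.starProjection_eq_self_iff.2 hy⟩

theorem exists_transl_projSet_convexHull_subset_projSet_closedBall
    (hξ : Module.finrank ℝ ξ ≤ 2) {ι : Type*} (p : ι → Euc n) {r : ℝ}
    (hp : ∀ i j, dist (p i) (p j) ≤ √3 * r) :
    ∃ w, transl (projSet ξ (convexHull ℝ (Set.range p))) w ⊆
      projSet ξ (Metric.closedBall 0 r) := by
  obtain ⟨c, hc⟩ := exists_forall_dist_le_of_finrank_le_two hξ
    (fun i ↦ ξ.orthogonalProjectionOnto (p i)) fun i j ↦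
      (ξ.lipschitzWith_orthogonalProjectionOnto.dist_le_mul (p i) (p j)).trans
        (by simpa using hp i j)
  have hshadow : projSet ξ (convexHull ℝ (Set.range p)) ⊆
      (ξ : Set (Euc n)) ∩ Metric.closedBall (c : Euc n) r := by
    rw [projSet_convexHull]
    refine convexHull_min ?_ (ξ.convex.inter (convex_closedBall _ _))
    rintro _ ⟨_, ⟨i, rfl⟩, rfl⟩
    exact ⟨Submodule.coe_mem _, hc i⟩
  refine ⟨-c, ?_⟩
  rintro _ ⟨y, hy, rfl⟩
  obtain ⟨hyξ, hyc⟩ := hshadow hy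
  refine inter_closedBall_zero_subset_projSet ξ r ⟨ξ.add_mem hyξ (ξ.neg_mem c.2), ?_⟩
  simpa [dist_eq_norm, sub_eq_add_neg] using hyc

end Shadows

section RegularSimplex

variable {V : Type*} [NormedAddCommGroup V] [InnerProductSpace ℝ V]

theorem sum_sum_norm_sub_sq {ι : Type*} [Fintype ι] (x : ι → V) :
    ∑ i, ∑ j, ‖x i - x j‖ ^ 2 =
      2 * Fintype.card ι * ∑ i, ‖x i‖ ^ 2 - 2 * ‖∑ i, x i‖ ^ 2 := by
  simp_rw [norm_sub_sq_real, Finset.sum_add_distrib, Finset.sum_sub_distrib, ← Finset.mul_sum,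
    ← inner_sum, ← sum_inner, Finset.sum_const, Finset.card_univ, nsmul_eq_mul,
    real_inner_self_eq_norm_sq]
  rw [← Finset.mul_sum]
  ring

/-- The circumradius of a regular simplex with `n` vertices and edge `d` is
`d √((n - 1) / (2 n))`. -/
theorem card_sub_one_mul_sq_le_of_pairwise_dist_eq {ι : Type*} [Fintype ι] [Nonempty ι]
    (w : ι → V) (c : V) {d r : ℝ} (hd : Pairwise fun i j ↦ dist (w i) (w j) = d)
    (hr : ∀ i, dist (w i) c ≤ r) :
    (Fintype.card ι - 1) * d ^ 2 ≤ 2 * Fintype.card ι * r ^ 2 := by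
  classical
  set N : ℝ := (Fintype.card ι : ℝ)
  have hrow (i : ι) : ∑ j, ‖w i - w j‖ ^ 2 = (N - 1) * d ^ 2 := by
    have h (j : ι) : ‖w i - w j‖ ^ 2 = d ^ 2 - if i = j then d ^ 2 else 0 := by
      rw [← dist_eq_norm]
      rcases eq_or_ne i j with rfl | hij
      · simp
      · simp [hd hij, hij]
    simp only [h, Finset.sum_sub_distrib, Finset.sum_const, Finset.card_univ, nsmul_eq_mul,
      Finset.sum_ite_eq, Finset.mem_univ, if_true, N]
    ring
  have hN : 0 < N := by positivity
  refine le_of_mul_le_mul_left ?_ hN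
  calc N * ((N - 1) * d ^ 2) = ∑ i, ∑ j, ‖w i - w j‖ ^ 2 := by
        simp only [hrow, Finset.sum_const, Finset.card_univ, nsmul_eq_mul, N]
    _ = ∑ i, ∑ j, ‖(w i - c) - (w j - c)‖ ^ 2 := by simp_rw [sub_sub_sub_cancel_right]
    _ = 2 * N * ∑ i, ‖w i - c‖ ^ 2 - 2 * ‖∑ i, (w i - c)‖ ^ 2 := sum_sum_norm_sub_sq _
    _ ≤ 2 * N * ∑ i, ‖w i - c‖ ^ 2 := sub_le_self _ (by positivity)
    _ ≤ 2 * N * ∑ _i : ι, r ^ 2 := by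
        gcongr with i
        rw [← dist_eq_norm]
        exact hr i
    _ = N * (2 * N * r ^ 2) := by
        rw [Finset.sum_const, Finset.card_univ, nsmul_eq_mul]
        ring

end RegularSimplex

/-- The regular tetrahedron T of edge length √3 can hide behind the unit ball B in ℝ³
(every shadow of B contains a translate of the corresponding shadow of T), yet T cannot
hide inside B. -/
theorem tetrahedron_hides_behind_ball (p : Fin 4 → Euc 3)
    (hdist : ∀ i j, i ≠ j → dist (p i) (p j) = Real.sqrt 3) :
    (∀ u : Euc 3, ‖u‖ = 1 →
      ∃ w, transl (projSet (ℝ ∙ u)ᗮ (convexHull ℝ (Set.range p))) w ⊆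
        projSet (ℝ ∙ u)ᗮ (Metric.closedBall (0 : Euc 3) 1)) ∧
    ¬ ∃ v, transl (convexHull ℝ (Set.range p)) v ⊆ Metric.closedBall (0 : Euc 3) 1 := by
  have hp (i j : Fin 4) : dist (p i) (p j) ≤ √3 * 1 := by
    rcases eq_or_ne i j with rfl | hij
    · simp
    · rw [hdist i j hij, mul_one]
  refine ⟨fun u hu ↦ ?_, ?_⟩
  · have : Fact (Module.finrank ℝ (Euc 3) = 2 + 1) := ⟨finrank_euclideanSpace_fin⟩
    have hu₀ : u ≠ 0 := by rintro rfl; simp at hu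
    exact exists_transl_projSet_convexHull_subset_projSet_closedBall _
      (Submodule.finrank_orthogonal_span_singleton hu₀).le p hp
  · rintro ⟨v, hv⟩
    have hball (i : Fin 4) : dist (p i) (-v) ≤ 1 := by
      simpa [dist_eq_norm] using hv ⟨p i, subset_convexHull ℝ _ ⟨i, rfl⟩, rfl⟩
    have := card_sub_one_mul_sq_le_of_pairwise_dist_eq p (-v) hdist hball
    norm_num at this
end
end
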